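/- arXiv:math/0401056 — 10 statements merged into one kernel-verified Lean document; each statement's English description precedes it below -/
import Mathlib

section
/- Let n ≥ 5 be a prime number. The number of cyclic compositions of n into three positive parts all of which are odd equals (n-1)(n+1)/24. -/
/-! Auxiliary definitions and lemmas for counting cyclic compositions of a prime `n ≥ 5`
into three positive odd parts. -/

/-- The type of compositions of `n` into three positive odd parts. -/
abbrev OddTriple (n : ℕ) := {t : ℕ × ℕ × ℕ // (0 < t.1 ∧ 0 < t.2.1 ∧ 0 < t.2.2) ∧
          (Odd t.1 ∧ Odd t.2.1 ∧ Odd t.2.2) ∧ t.1 + t.2.1 + t.2.2 = n}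

/-- The cyclic rotation relation. -/
abbrev rotRel (n : ℕ) : OddTriple n → OddTriple n → Prop :=
  fun x y => (y : ℕ × ℕ × ℕ) = (x.val.2.1, x.val.2.2, x.val.1)

/-- The cyclic rotation on odd triples. -/
def rotT (n : ℕ) (x : OddTriple n) : OddTriple n :=
  ⟨(x.val.2.1, x.val.2.2, x.val.1),
    ⟨x.2.1.2.1, x.2.1.2.2, x.2.1.1⟩,
    ⟨x.2.2.1.2.1, x.2.2.1.2.2, x.2.2.1.1⟩,
    show x.val.2.1 + x.val.2.2 + x.val.1 = n by have := x.2.2.2; omega⟩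

lemma rotRel_iff (n : ℕ) (x y : OddTriple n) : rotRel n x y ↔ y = rotT n x := by
  rw [Subtype.ext_iff]; exact Iff.rfl

lemma rotT_rotT_rotT (n : ℕ) (x : OddTriple n) : rotT n (rotT n (rotT n x)) = x := by
  apply Subtype.ext; rfl

lemma rotT_ne (n : ℕ) (hn : n.Prime) (h5 : 5 ≤ n) (x : OddTriple n) : rotT n x ≠ x := by
  obtain ⟨⟨a, b, c⟩, hp⟩ := x
  intro h
  have h' := congrArg Subtype.val h
  have e1 : b = a := congrArg Prod.fst h'
  have e2 : c = b := congrArg (fun p => p.2.1) h'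
  have hs : a + b + c = n := hp.2.2
  have hd : (3 : ℕ) ∣ n := ⟨a, by omega⟩
  rcases hn.eq_one_or_self_of_dvd 3 hd with h3 | h3 <;> omega

lemma rotT_rotT_ne (n : ℕ) (hn : n.Prime) (h5 : 5 ≤ n) (x : OddTriple n) :
    rotT n (rotT n x) ≠ x := by
  intro h
  have h2 := congrArg (rotT n) h
  rw [rotT_rotT_rotT] at h2
  exact rotT_ne n hn h5 x h2.symm

lemma rotT_ne_rotT_rotT (n : ℕ) (hn : n.Prime) (h5 : 5 ≤ n) (x : OddTriple n) :
    rotT n x ≠ rotT n (rotT n x) := by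
  intro h
  have h2 := congrArg (fun y => rotT n (rotT n y)) h
  rw [rotT_rotT_rotT] at h2
  exact rotT_ne n hn h5 x h2.symm

/-- The orbit relation. -/
def orbR (n : ℕ) (x y : OddTriple n) : Prop :=
  y = x ∨ y = rotT n x ∨ y = rotT n (rotT n x)

lemma orbR_symm (n : ℕ) {x y : OddTriple n} (h : orbR n x y) : orbR n y x := by
  rcases h with h | h | h
  · exact Or.inl h.symm
  · subst h; exact Or.inr (Or.inr (rotT_rotT_rotT n x).symm)
  · subst h; exact Or.inr (Or.inl (rotT_rotT_rotT n x).symm)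

lemma orbR_trans (n : ℕ) {x y z : OddTriple n} (h1 : orbR n x y) (h2 : orbR n y z) :
    orbR n x z := by
  rcases h1 with h1 | h1 | h1 <;> subst h1 <;>
    rcases h2 with h2 | h2 | h2 <;> subst h2 <;>
    simp [orbR, rotT_rotT_rotT]

lemma quot_mk_eq_iff (n : ℕ) (x y : OddTriple n) :
    Quot.mk (rotRel n) x = Quot.mk (rotRel n) y ↔ orbR n x y := by
  rw [Quot.eq]
  constructor
  · intro h
    induction h with
    | rel a b hab => exact Or.inr (Or.inl ((rotRel_iff n a b).mp hab))
    | refl a => exact Or.inl rfl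
    | symm a b _ ih => exact orbR_symm n ih
    | trans a b c _ _ ih1 ih2 => exact orbR_trans n ih1 ih2
  · intro h
    rcases h with h | h | h
    · rw [h]; exact Relation.EqvGen.refl _
    · rw [h]; exact Relation.EqvGen.rel _ _ ((rotRel_iff n x _).mpr rfl)
    · rw [h]
      exact Relation.EqvGen.trans _ (rotT n x) _
        (Relation.EqvGen.rel _ _ ((rotRel_iff n x _).mpr rfl))
        (Relation.EqvGen.rel _ _ ((rotRel_iff n _ _).mpr rfl))

lemma card_oddTriple_eq (n : ℕ) (hn : n.Prime) (h5 : 5 ≤ n) :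
    Nat.card (OddTriple n) = Nat.card (Quot (rotRel n)) * 3 := by
  let e : Quot (rotRel n) × Fin 3 → OddTriple n := fun p =>
    (rotT n)^[p.2.val] p.1.out
  have hmk : ∀ (q : Quot (rotRel n)) (k : Fin 3),
      Quot.mk (rotRel n) ((rotT n)^[k.val] q.out) = q := by
    intro q k
    have h1 : orbR n q.out ((rotT n)^[k.val] q.out) := by
      fin_cases k
      · exact Or.inl rfl
      · exact Or.inr (Or.inl rfl)
      · exact Or.inr (Or.inr rfl)
    calc Quot.mk (rotRel n) ((rotT n)^[k.val] q.out)
        = Quot.mk (rotRel n) q.out := ((quot_mk_eq_iff n _ _).mpr h1).symm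
      _ = q := Quot.out_eq q
  have hbij : Function.Bijective e := by
    constructor
    · rintro ⟨q, k⟩ ⟨q', k'⟩ h
      simp only [e] at h
      have hq : q = q' := by
        rw [← hmk q k, ← hmk q' k', h]
      subst hq
      have hk : k = k' := by
        set y := q.out with hy
        fin_cases k <;> fin_cases k' <;> simp only [Function.iterate_succ,
          Function.iterate_zero, Function.comp_apply, id_eq] at h <;>
          first
          | rfl
          | exact absurd h (Ne.symm (rotT_ne n hn h5 y))
          | exact absurd h (rotT_ne n hn h5 y)
          | exact absurd h (Ne.symm (rotT_rotT_ne n hn h5 y))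
          | exact absurd h (rotT_rotT_ne n hn h5 y)
          | exact absurd h (rotT_ne_rotT_rotT n hn h5 y)
          | exact absurd h (Ne.symm (rotT_ne_rotT_rotT n hn h5 y))
      rw [hk]
    · intro x
      have h1 : orbR n (Quot.mk (rotRel n) x).out x := by
        apply (quot_mk_eq_iff n _ _).mp
        rw [Quot.out_eq]
      rcases h1 with h | h | h
      · exact ⟨(Quot.mk (rotRel n) x, ⟨0, by omega⟩), h.symm⟩
      · exact ⟨(Quot.mk (rotRel n) x, ⟨1, by omega⟩), h.symm⟩
      · exact ⟨(Quot.mk (rotRel n) x, ⟨2, by omega⟩), h.symm⟩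
  calc Nat.card (OddTriple n) = Nat.card (Quot (rotRel n) × Fin 3) :=
        (Nat.card_eq_of_bijective e hbij).symm
    _ = Nat.card (Quot (rotRel n)) * Nat.card (Fin 3) := Nat.card_prod _ _
    _ = Nat.card (Quot (rotRel n)) * 3 := by
        rw [show Nat.card (Fin 3) = 3 by simp [Nat.card_eq_fintype_card]]

/-- Triangle-count type. -/
abbrev TriT (m : ℕ) := {p : ℕ × ℕ // p.1 + p.2 ≤ m}

lemma card_triT (m : ℕ) : Nat.card (TriT m) * 2 = (m + 1) * (m + 2) := by
  have e : TriT m ≃ Σ i : Fin (m + 1), Fin (m + 1 - i.val) :=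
    { toFun := fun p => ⟨⟨p.val.1, by have := p.property; omega⟩,
        ⟨p.val.2, show p.val.2 < m + 1 - p.val.1 by have := p.property; omega⟩⟩
      invFun := fun s => ⟨(s.1.val, s.2.val), by
        have h1 := s.1.isLt; have h2 := s.2.isLt
        show s.1.val + s.2.val ≤ m
        omega⟩
      left_inv := fun p => rfl
      right_inv := fun s => rfl }
  rw [Nat.card_congr e, Nat.card_eq_fintype_card, Fintype.card_sigma]
  simp only [Fintype.card_fin]
  rw [Fin.sum_univ_eq_sum_range (fun i => m + 1 - i) (m + 1)]
  have h1 : ∑ i ∈ Finset.range (m + 1), (m + 1 - i) = ∑ i ∈ Finset.range (m + 1), (i + 1) := by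
    rw [← Finset.sum_range_reflect (fun i => i + 1) (m + 1)]
    apply Finset.sum_congr rfl
    intro j hj
    simp only [Finset.mem_range] at hj
    omega
  have h4 : (∑ i ∈ Finset.range (m + 1), (i + 1)) = ∑ i ∈ Finset.range (m + 2), i := by
    rw [Finset.sum_range_succ' (fun i => i) (m + 1)]
    omega
  rw [h1, h4, Finset.sum_range_id_mul_two]
  have h5 : m + 2 - 1 = m + 1 := by omega
  rw [h5]
  ring

lemma card_oddTriple (m : ℕ) :
    Nat.card (OddTriple (2 * m + 3)) * 2 = (m + 1) * (m + 2) := by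
  have e : OddTriple (2 * m + 3) ≃ TriT m :=
    { toFun := fun x => ⟨(x.val.1 / 2, x.val.2.1 / 2), by
        have o1 : x.val.1 % 2 = 1 := Nat.odd_iff.mp x.2.2.1.1
        have o2 : x.val.2.1 % 2 = 1 := Nat.odd_iff.mp x.2.2.1.2.1
        have h3 : 0 < x.val.2.2 := x.2.1.2.2
        have hs : x.val.1 + x.val.2.1 + x.val.2.2 = 2 * m + 3 := x.2.2.2
        show x.val.1 / 2 + x.val.2.1 / 2 ≤ m
        omega⟩
      invFun := fun p =>
        ⟨(2 * p.val.1 + 1, 2 * p.val.2 + 1, 2 * m + 3 - (2 * p.val.1 + 2 * p.val.2 + 2)), by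
          have hp : p.val.1 + p.val.2 ≤ m := p.property
          refine ⟨⟨?_, ?_, ?_⟩, ⟨?_, ?_, ?_⟩, ?_⟩
          · show 0 < 2 * p.val.1 + 1; omega
          · show 0 < 2 * p.val.2 + 1; omega
          · show 0 < 2 * m + 3 - (2 * p.val.1 + 2 * p.val.2 + 2); omega
          · show Odd (2 * p.val.1 + 1); exact Nat.odd_iff.mpr (by omega)
          · show Odd (2 * p.val.2 + 1); exact Nat.odd_iff.mpr (by omega)
          · show Odd (2 * m + 3 - (2 * p.val.1 + 2 * p.val.2 + 2))
            exact Nat.odd_iff.mpr (by omega)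
          · show 2 * p.val.1 + 1 + (2 * p.val.2 + 1) +
              (2 * m + 3 - (2 * p.val.1 + 2 * p.val.2 + 2)) = 2 * m + 3
            omega⟩
      left_inv := fun x => by
        have o1 : x.val.1 % 2 = 1 := Nat.odd_iff.mp x.2.2.1.1
        have o2 : x.val.2.1 % 2 = 1 := Nat.odd_iff.mp x.2.2.1.2.1
        have h3 : 0 < x.val.2.2 := x.2.1.2.2
        have hs : x.val.1 + x.val.2.1 + x.val.2.2 = 2 * m + 3 := x.2.2.2
        apply Subtype.ext
        show (2 * (x.val.1 / 2) + 1, 2 * (x.val.2.1 / 2) + 1,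
          2 * m + 3 - (2 * (x.val.1 / 2) + 2 * (x.val.2.1 / 2) + 2)) = x.val
        have e1 : 2 * (x.val.1 / 2) + 1 = x.val.1 := by omega
        have e2 : 2 * (x.val.2.1 / 2) + 1 = x.val.2.1 := by omega
        have e3 : 2 * m + 3 - (2 * (x.val.1 / 2) + 2 * (x.val.2.1 / 2) + 2) = x.val.2.2 := by
          omega
        rw [e1, e2, e3]
      right_inv := fun p => by
        have hp : p.val.1 + p.val.2 ≤ m := p.property
        apply Subtype.ext
        show ((2 * p.val.1 + 1) / 2, (2 * p.val.2 + 1) / 2) = p.val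
        have e1 : (2 * p.val.1 + 1) / 2 = p.val.1 := by omega
        have e2 : (2 * p.val.2 + 1) / 2 = p.val.2 := by omega
        rw [e1, e2] }
  rw [Nat.card_congr e]
  exact card_triT m

/-- For a prime `n ≥ 5`, the number of cyclic compositions of `n` into
three positive odd parts equals `(n-1)(n+1)/24`. -/
theorem cyclic_compositions_all_odd_count (n : ℕ) (hn : n.Prime) (h5 : 5 ≤ n) :
    Nat.card (Quot (fun x y :
        {t : ℕ × ℕ × ℕ // (0 < t.1 ∧ 0 < t.2.1 ∧ 0 < t.2.2) ∧
          (Odd t.1 ∧ Odd t.2.1 ∧ Odd t.2.2) ∧ t.1 + t.2.1 + t.2.2 = n} =>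
        (y : ℕ × ℕ × ℕ) = (x.val.2.1, x.val.2.2, x.val.1))) = (n - 1) * (n + 1) / 24 := by
  have hodd : n % 2 = 1 := by
    rcases hn.eq_two_or_odd with h | h
    · omega
    · exact h
  obtain ⟨m, rfl⟩ : ∃ m, n = 2 * m + 3 := ⟨(n - 3) / 2, by omega⟩
  have h1 := card_oddTriple m
  have h2 := card_oddTriple_eq (2 * m + 3) hn h5
  show Nat.card (Quot (rotRel (2 * m + 3))) = (2 * m + 3 - 1) * (2 * m + 3 + 1) / 24
  have h3 : (2 * m + 3 - 1) * (2 * m + 3 + 1) = ((m + 1) * (m + 2)) * 4 := by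
    have e1 : 2 * m + 3 - 1 = 2 * m + 2 := by omega
    rw [e1]; ring
  rw [h3]
  have h4 : Nat.card (Quot (rotRel (2 * m + 3))) * 3 * 2 = (m + 1) * (m + 2) := by
    rw [← h2]; exact h1
  omega
end

section
/- Let n ≥ 5 be a prime number. The number of cyclic compositions of n into three positive parts of which exactly one is odd and two are even equals (n-1)(n-3)/8. -/
/-!
A composition with exactly one odd part has exactly one rotation that puts the odd part first,
so the cyclic classes correspond to the compositions `(a, 2b, 2c)` with `a` odd. For
`n = 2k + 1` these correspond to the `2`-subsets `{b, b + c}` of `{1, …, k}`, of which there are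
`k.choose 2 = (n - 1)(n - 3)/8`.
-/

namespace CyclicComposition

def rotate (t : ℕ × ℕ × ℕ) : ℕ × ℕ × ℕ := (t.2.1, t.2.2, t.1)

def IsOneOdd (n : ℕ) (t : ℕ × ℕ × ℕ) : Prop :=
  (0 < t.1 ∧ 0 < t.2.1 ∧ 0 < t.2.2) ∧
    ((Odd t.1 ∧ Even t.2.1 ∧ Even t.2.2) ∨ (Even t.1 ∧ Odd t.2.1 ∧ Even t.2.2) ∨
      (Even t.1 ∧ Even t.2.1 ∧ Odd t.2.2)) ∧ t.1 + t.2.1 + t.2.2 = n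

def CyclicOneOdd (n : ℕ) : Type :=
  Quot fun x y : {t // IsOneOdd n t} => y.val = rotate x.val

theorem isOneOdd_iff {n : ℕ} {t : ℕ × ℕ × ℕ} :
    IsOneOdd n t ↔ 0 < t.1 ∧ 0 < t.2.1 ∧ 0 < t.2.2 ∧
      t.1 % 2 + t.2.1 % 2 + t.2.2 % 2 = 1 ∧ t.1 + t.2.1 + t.2.2 = n := by
  simp only [IsOneOdd, Nat.odd_iff, Nat.even_iff]
  omega

theorem isOneOdd_rotate {n : ℕ} {t : ℕ × ℕ × ℕ} (h : IsOneOdd n t) :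
    IsOneOdd n (rotate t) := by
  rw [isOneOdd_iff] at h ⊢
  simp only [rotate]
  omega

def oddFirst (t : ℕ × ℕ × ℕ) : ℕ × ℕ × ℕ :=
  if t.1 % 2 = 1 then t else if t.2.1 % 2 = 1 then rotate t else rotate (rotate t)

theorem oddFirst_of_odd {t : ℕ × ℕ × ℕ} (h : Odd t.1) : oddFirst t = t :=
  if_pos (Nat.odd_iff.mp h)

theorem isOneOdd_oddFirst {n : ℕ} {t : ℕ × ℕ × ℕ} (h : IsOneOdd n t) :
    IsOneOdd n (oddFirst t) ∧ Odd (oddFirst t).1 := by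
  rw [isOneOdd_iff] at h
  simp only [oddFirst, rotate]
  split_ifs <;> simp only [isOneOdd_iff, Nat.odd_iff] <;> omega

theorem oddFirst_rotate {n : ℕ} {t : ℕ × ℕ × ℕ} (h : IsOneOdd n t) :
    oddFirst (rotate t) = oddFirst t := by
  obtain ⟨a, b, c⟩ := t
  rw [isOneOdd_iff] at h
  show oddFirst (b, c, a) = oddFirst (a, b, c)
  simp only [oddFirst, rotate] at h ⊢
  split_ifs <;> simp only [Prod.mk.injEq] <;> omega

theorem mk_rotate {n : ℕ} (x : {t // IsOneOdd n t}) :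
    (Quot.mk _ ⟨rotate x.val, isOneOdd_rotate x.2⟩ : CyclicOneOdd n) = Quot.mk _ x :=
  (Quot.sound (r := fun x y : {t // IsOneOdd n t} => y.val = rotate x.val) rfl).symm

theorem mk_oddFirst {n : ℕ} (x : {t // IsOneOdd n t}) :
    (Quot.mk _ ⟨oddFirst x.val, (isOneOdd_oddFirst x.2).1⟩ : CyclicOneOdd n) = Quot.mk _ x := by
  obtain ⟨t, ht⟩ := x
  unfold oddFirst
  split_ifs
  · rfl
  · exact mk_rotate _
  · exact (mk_rotate ⟨rotate t, isOneOdd_rotate ht⟩).trans (mk_rotate ⟨t, ht⟩)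

def cyclicOneOddEquivOddFirst (n : ℕ) :
    CyclicOneOdd n ≃ {t // IsOneOdd n t ∧ Odd t.1} where
  toFun := Quot.lift (fun x => ⟨oddFirst x.val, isOneOdd_oddFirst x.2⟩)
    fun x y (hxy : y.val = _) => Subtype.ext <| by simp only [hxy, oddFirst_rotate x.2]
  invFun s := Quot.mk _ ⟨s.val, s.2.1⟩
  left_inv := Quot.ind mk_oddFirst
  right_inv s := Subtype.ext (oddFirst_of_odd s.2.2)

/-- `(a, 2b, 2c) ↦ {b, b + c}`, shifted to `Fin k`. -/
def oddFirstEquivLtPairs (k : ℕ) :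
    {t // IsOneOdd (2 * k + 1) t ∧ Odd t.1} ≃ {x : Fin k × Fin k // x.1 < x.2} where
  toFun t :=
    ⟨(⟨t.val.2.1 / 2 - 1, by have := isOneOdd_iff.1 t.2.1; omega⟩,
      ⟨(t.val.2.1 + t.val.2.2) / 2 - 1, by have := isOneOdd_iff.1 t.2.1; omega⟩), by
      have := isOneOdd_iff.1 t.2.1
      have := Nat.odd_iff.1 t.2.2
      rw [Fin.mk_lt_mk]; omega⟩
  invFun x := ⟨(2 * k + 1 - 2 * (x.val.2 + 1), 2 * (x.val.1 + 1), 2 * (x.val.2 - x.val.1)), by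
    have := Fin.lt_def.1 x.2
    rw [isOneOdd_iff, Nat.odd_iff]; dsimp only; omega⟩
  left_inv t := by
    have := isOneOdd_iff.1 t.2.1
    have := Nat.odd_iff.1 t.2.2
    ext <;> dsimp only <;> omega
  right_inv x := by
    have := Fin.lt_def.1 x.2
    ext <;> dsimp only <;> omega

theorem card_cyclicOneOdd_of_odd {n : ℕ} (hn : Odd n) :
    Nat.card (CyclicOneOdd n) = (n - 1) * (n - 3) / 8 := by
  obtain ⟨k, rfl⟩ := hn
  rw [Nat.card_congr ((cyclicOneOddEquivOddFirst _).trans (oddFirstEquivLtPairs k)),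
    Nat.card_eq_fintype_card, Fintype.card_subtype, Fintype.card_product_filter_lt,
    Fintype.card_fin, Nat.choose_two_right]
  have : (2 * k + 1 - 1) * (2 * k + 1 - 3) = 4 * (k * (k - 1)) := by
    rw [show 2 * k + 1 - 1 = 2 * k by omega, show 2 * k + 1 - 3 = 2 * (k - 1) by omega]
    ring
  omega

end CyclicComposition

/-- For a prime `n ≥ 5`, the number of cyclic compositions of `n` into
three positive parts exactly one of which is odd (and two of which are even)
equals `(n-1)(n-3)/8`. -/
theorem cyclic_compositions_one_odd_count (n : ℕ) (hn : n.Prime) (h5 : 5 ≤ n) :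
    Nat.card (Quot (fun x y :
        {t : ℕ × ℕ × ℕ // (0 < t.1 ∧ 0 < t.2.1 ∧ 0 < t.2.2) ∧
          ((Odd t.1 ∧ Even t.2.1 ∧ Even t.2.2) ∨ (Even t.1 ∧ Odd t.2.1 ∧ Even t.2.2) ∨
            (Even t.1 ∧ Even t.2.1 ∧ Odd t.2.2)) ∧ t.1 + t.2.1 + t.2.2 = n} =>
        (y : ℕ × ℕ × ℕ) = (x.val.2.1, x.val.2.2, x.val.1))) = (n - 1) * (n - 3) / 8 :=
  CyclicComposition.card_cyclicOneOdd_of_odd (hn.odd_of_ne_two (by omega))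
end

section
/- The sum of 1/(a²b²) over all pairs (a,b) of coprime positive integers with both a and b odd equals 3/2. -/
open Real

noncomputable section AuxCoprimeOdd

/-- Odd positive naturals. -/
abbrev OddPos := {n : ℕ // 0 < n ∧ Odd n}

/-- Coprime odd positive pairs. -/
abbrev CopOddPair := {p : ℕ × ℕ // 0 < p.1 ∧ 0 < p.2 ∧ Odd p.1 ∧ Odd p.2 ∧ Nat.Coprime p.1 p.2}

/-- `ℕ ≃ OddPos` via `n ↦ 2n+1`. -/
def oddPosEquiv : ℕ ≃ OddPos where
  toFun n := ⟨2 * n + 1, Nat.succ_pos _, ⟨n, by ring⟩⟩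
  invFun m := m.val / 2
  left_inv n := by simp [Nat.mul_add_div]
  right_inv m := by
    obtain ⟨m, hm, k, hk⟩ := m
    ext
    simp only [hk]
    omega

/-- The regrouping equivalence: `(d, (a,b)) ↦ (d*a, d*b)`. -/
def regroupEquiv : OddPos × CopOddPair ≃ OddPos × OddPos where
  toFun q := (⟨q.1.val * q.2.val.1, Nat.mul_pos q.1.prop.1 q.2.prop.1,
      q.1.prop.2.mul q.2.prop.2.2.1⟩,
    ⟨q.1.val * q.2.val.2, Nat.mul_pos q.1.prop.1 q.2.prop.2.1,
      q.1.prop.2.mul q.2.prop.2.2.2.1⟩)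
  invFun p := by
    obtain ⟨⟨a, ha, hao⟩, ⟨b, hb, hbo⟩⟩ := p
    refine ⟨⟨Nat.gcd a b, Nat.gcd_pos_of_pos_left _ ha, ?_⟩,
      ⟨(a / Nat.gcd a b, b / Nat.gcd a b), ?_, ?_, ?_, ?_, ?_⟩⟩
    · exact hao.of_dvd_nat (Nat.gcd_dvd_left a b)
    · exact Nat.div_pos (Nat.le_of_dvd ha (Nat.gcd_dvd_left a b))
        (Nat.gcd_pos_of_pos_left _ ha)
    · exact Nat.div_pos (Nat.le_of_dvd hb (Nat.gcd_dvd_right a b))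
        (Nat.gcd_pos_of_pos_left _ ha)
    · exact hao.of_dvd_nat (Nat.div_dvd_of_dvd (Nat.gcd_dvd_left a b))
    · exact hbo.of_dvd_nat (Nat.div_dvd_of_dvd (Nat.gcd_dvd_right a b))
    · exact Nat.coprime_div_gcd_div_gcd (Nat.gcd_pos_of_pos_left _ ha)
  left_inv q := by
    obtain ⟨⟨d, hd, hdo⟩, ⟨⟨a, b⟩, ha, hb, hao, hbo, hab⟩⟩ := q
    have hg : Nat.gcd (d * a) (d * b) = d := by
      rw [Nat.gcd_mul_left, hab]; simp
    simp only [Prod.mk.injEq, Subtype.mk.injEq]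
    refine ⟨by simp [hg], ?_, ?_⟩ <;>
      simp only [hg, Nat.mul_div_cancel_left _ hd]
  right_inv p := by
    obtain ⟨⟨a, ha, hao⟩, ⟨b, hb, hbo⟩⟩ := p
    simp only [Prod.mk.injEq, Subtype.mk.injEq]
    exact ⟨Nat.mul_div_cancel' (Nat.gcd_dvd_left a b),
      Nat.mul_div_cancel' (Nat.gcd_dvd_right a b)⟩

theorem hasSum_odd_inv_sq :
    HasSum (fun n : ℕ => (1 : ℝ) / ((2 * n + 1 : ℕ) : ℝ) ^ 2) (π ^ 2 / 8) := by
  have hζ := hasSum_zeta_two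
  have heven : HasSum (fun k : ℕ => (1 : ℝ) / ((2 * k : ℕ) : ℝ) ^ 2) (π ^ 2 / 24) := by
    have h := hζ.mul_left (1 / 4)
    rw [show (1 / 4 : ℝ) * (π ^ 2 / 6) = π ^ 2 / 24 by ring] at h
    have hfun : (fun k : ℕ => (1 : ℝ) / ((2 * k : ℕ) : ℝ) ^ 2)
        = fun k : ℕ => (1 / 4 : ℝ) * (1 / (k : ℝ) ^ 2) := by
      funext k
      push_cast
      rw [mul_pow, one_div, one_div, mul_inv, ← one_div]
      norm_num
    rw [hfun]
    exact h
  have hsum : Summable fun k : ℕ => (1 : ℝ) / ((2 * k + 1 : ℕ) : ℝ) ^ 2 := by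
    have hinj : Function.Injective (fun k : ℕ => 2 * k + 1) := fun m n h => by
      simp only at h; omega
    have := hζ.summable.comp_injective hinj
    simpa [Function.comp_def] using this
  have hodd := hsum.hasSum
  have htot := hζ.unique
    (HasSum.even_add_odd (f := fun n : ℕ => (1 : ℝ) / (n : ℝ) ^ 2) heven hodd)
  have hv : (∑' k : ℕ, (1 : ℝ) / ((2 * k + 1 : ℕ) : ℝ) ^ 2) = π ^ 2 / 8 := by linarith
  rwa [hv] at hodd

theorem hasSum_odd_inv_four :
    HasSum (fun n : ℕ => (1 : ℝ) / ((2 * n + 1 : ℕ) : ℝ) ^ 4) (π ^ 4 / 96) := by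
  have hζ := hasSum_zeta_four
  have heven : HasSum (fun k : ℕ => (1 : ℝ) / ((2 * k : ℕ) : ℝ) ^ 4) (π ^ 4 / 1440) := by
    have h := hζ.mul_left (1 / 16)
    rw [show (1 / 16 : ℝ) * (π ^ 4 / 90) = π ^ 4 / 1440 by ring] at h
    have hfun : (fun k : ℕ => (1 : ℝ) / ((2 * k : ℕ) : ℝ) ^ 4)
        = fun k : ℕ => (1 / 16 : ℝ) * (1 / (k : ℝ) ^ 4) := by
      funext k
      push_cast
      rw [mul_pow, one_div, one_div, mul_inv, ← one_div]
      norm_num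
    rw [hfun]
    exact h
  have hsum : Summable fun k : ℕ => (1 : ℝ) / ((2 * k + 1 : ℕ) : ℝ) ^ 4 := by
    have hinj : Function.Injective (fun k : ℕ => 2 * k + 1) := fun m n h => by
      simp only at h; omega
    have := hζ.summable.comp_injective hinj
    simpa [Function.comp_def] using this
  have hodd := hsum.hasSum
  have htot := hζ.unique
    (HasSum.even_add_odd (f := fun n : ℕ => (1 : ℝ) / (n : ℝ) ^ 4) heven hodd)
  have hv : (∑' k : ℕ, (1 : ℝ) / ((2 * k + 1 : ℕ) : ℝ) ^ 4) = π ^ 4 / 96 := by linarith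
  rwa [hv] at hodd

theorem hasSum_oddPos_inv_sq :
    HasSum (fun m : OddPos => (1 : ℝ) / (m.val : ℝ) ^ 2) (π ^ 2 / 8) := by
  refine (Equiv.hasSum_iff oddPosEquiv).1 ?_
  exact hasSum_odd_inv_sq

theorem hasSum_oddPos_inv_four :
    HasSum (fun m : OddPos => (1 : ℝ) / (m.val : ℝ) ^ 4) (π ^ 4 / 96) := by
  refine (Equiv.hasSum_iff oddPosEquiv).1 ?_
  exact hasSum_odd_inv_four

end AuxCoprimeOdd

set_option maxHeartbeats 2000000 in
/-- The sum of `1/(a²b²)` over all pairs of coprime odd positive integers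
`(a,b)` equals `3/2`. -/
theorem tsum_coprime_odd_inv_sq_sq :
    ∑' p : {p : ℕ × ℕ // 0 < p.1 ∧ 0 < p.2 ∧ Odd p.1 ∧ Odd p.2 ∧ Nat.Coprime p.1 p.2},
      (1 : ℝ) / ((p.val.1 : ℝ) ^ 2 * (p.val.2 : ℝ) ^ 2) = 3 / 2 := by
  have hT := hasSum_oddPos_inv_sq
  have hU := hasSum_oddPos_inv_four
  have hpairs : HasSum (fun q : OddPos × OddPos =>
      (1 : ℝ) / (q.1.val : ℝ) ^ 2 * ((1 : ℝ) / (q.2.val : ℝ) ^ 2))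
      (π ^ 2 / 8 * (π ^ 2 / 8)) := by
    refine hT.mul hT (Summable.mul_of_nonneg hT.summable hT.summable ?_ ?_) <;>
      exact fun m => by positivity
  set fC : CopOddPair → ℝ := fun p => (1 : ℝ) / ((p.val.1 : ℝ) ^ 2 * (p.val.2 : ℝ) ^ 2) with hfC
  have hre : HasSum
      (fun q : OddPos × CopOddPair => (1 : ℝ) / (q.1.val : ℝ) ^ 4 * fC q.2)
      (π ^ 2 / 8 * (π ^ 2 / 8)) := by
    have h2 := (Equiv.hasSum_iff regroupEquiv
      (f := fun q : OddPos × OddPos =>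
        (1 : ℝ) / (q.1.val : ℝ) ^ 2 * ((1 : ℝ) / (q.2.val : ℝ) ^ 2))).2 hpairs
    have hfun : ((fun q : OddPos × OddPos =>
        (1 : ℝ) / (q.1.val : ℝ) ^ 2 * ((1 : ℝ) / (q.2.val : ℝ) ^ 2)) ∘ regroupEquiv)
        = fun q : OddPos × CopOddPair => (1 : ℝ) / (q.1.val : ℝ) ^ 4 * fC q.2 := by
      funext q
      simp only [Function.comp_apply, hfC]
      have h1 : (((regroupEquiv q).1 : ℕ)) = q.1.val * q.2.val.1 := rfl
      have h2 : (((regroupEquiv q).2 : ℕ)) = q.1.val * q.2.val.2 := rfl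
      rw [h1, h2]
      push_cast
      rw [one_div, one_div, one_div, one_div, ← mul_inv, ← mul_inv]
      congr 1
      ring
    rwa [hfun] at h2
  have hCsum : Summable fC := by
    have hinj : Function.Injective
        (fun c : CopOddPair => ((⟨1, one_pos, odd_one⟩ : OddPos), c)) :=
      fun c c' h => by simpa using h
    have := hre.summable.comp_injective hinj
    simpa [Function.comp_def] using this
  have hC := hCsum.hasSum
  have hprod : HasSum
      (fun q : OddPos × CopOddPair => (1 : ℝ) / (q.1.val : ℝ) ^ 4 * fC q.2)
      (π ^ 4 / 96 * ∑' p, fC p) := by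
    refine hU.mul hC (Summable.mul_of_nonneg hU.summable hCsum ?_ ?_)
    · exact fun m => by positivity
    · intro p
      simp only [hfC]
      positivity
  have key : π ^ 4 / 96 * ∑' p, fC p = π ^ 2 / 8 * (π ^ 2 / 8) := hprod.unique hre
  have h96 : (π : ℝ) ^ 4 / 96 ≠ 0 := by positivity
  have hfin : (∑' p, fC p) = 3 / 2 :=
    mul_left_cancel₀ h96
      (key.trans (by ring : π ^ 2 / 8 * (π ^ 2 / 8) = π ^ 4 / 96 * (3 / 2)))
  exact hfin
end

section
/- The sum of 1/(a²b²) over all pairs (a,b) of coprime positive integers of opposite parity (i.e. a + b odd) equals 1. -/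
/-!
Every pair `(m, n)` of positive integers is uniquely `d • (a, b)` with `a, b` coprime, so for
a completely multiplicative `g ≥ 0` we get `(∑ g)² = (∑ g²) · ∑_{a ⊥ b} g a g b`. For
`g n = 1/n²` this makes the sum over coprime pairs `ζ(2)² / ζ(4) = 5/2`; for `g` supported on
odd numbers it makes the sum over coprime pairs of odd numbers `(π²/8)² / (π⁴/96) = 3/2`.
A coprime pair is never both even, so its sum is odd exactly when it is not both odd, and the
answer is `5/2 - 3/2`.
-/

open Set

lemma Nat.eq_and_eq_and_eq_of_mul_coprime {d d' a b a' b' : ℕ} (hd : d ≠ 0)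
    (hab : a.Coprime b) (hab' : a'.Coprime b') (ha : d * a = d' * a') (hb : d * b = d' * b') :
    d = d' ∧ a = a' ∧ b = b' := by
  have hdd' : d = d' := by
    simpa [Nat.gcd_mul_left, hab.gcd_eq_one, hab'.gcd_eq_one, ha, hb] using
      (Nat.gcd_mul_left d a b).symm
  subst hdd'
  exact ⟨rfl, Nat.eq_of_mul_eq_mul_left (Nat.pos_of_ne_zero hd) ha,
    Nat.eq_of_mul_eq_mul_left (Nat.pos_of_ne_zero hd) hb⟩

theorem summable_coprime_mul {g : ℕ → ℝ} (hnn : 0 ≤ g) (hg : Summable g) :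
    Summable fun p : {p : ℕ × ℕ // p.1.Coprime p.2} => g p.1.1 * g p.1.2 :=
  (hg.mul_of_nonneg hg hnn hnn).subtype _

theorem tsum_sq_mul_tsum_coprime {g : ℕ → ℝ} (hg0 : g 0 = 0)
    (hmul : ∀ m n, g (m * n) = g m * g n) (hnn : 0 ≤ g) (hg : Summable g) :
    (∑' n, g n ^ 2) * ∑' p : {p : ℕ × ℕ // p.1.Coprime p.2}, g p.1.1 * g p.1.2 =
      (∑' n, g n) ^ 2 := by
  have hprod : Summable fun p : ℕ × ℕ => g p.1 * g p.2 := hg.mul_of_nonneg hg hnn hnn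
  have hsq : Summable fun n => g n ^ 2 := by
    simpa [Function.comp_def, sq] using
      hprod.comp_injective (i := fun n => (n, n)) fun m n h => congrArg Prod.fst h
  have hcop := summable_coprime_mul hnn hg
  rw [sq (∑' n, g n), hg.tsum_mul_tsum hg hprod, hsq.tsum_mul_tsum hcop
    (hsq.mul_of_nonneg hcop (fun n => sq_nonneg _) fun p => mul_nonneg (hnn _) (hnn _))]
  have hscale : ∀ (d : ℕ) (p : {p : ℕ × ℕ // p.1.Coprime p.2}),
      g (d * p.1.1) * g (d * p.1.2) = g d ^ 2 * (g p.1.1 * g p.1.2) := by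
    intro d p; rw [hmul, hmul]; ring
  refine (tsum_eq_tsum_of_ne_zero_bij (fun x => (x.1.1 * x.1.2.1.1, x.1.1 * x.1.2.1.2))
    ?_ ?_ fun x => hscale x.1.1 x.1.2).symm
  · rintro ⟨⟨d, ⟨⟨a, b⟩, hab⟩⟩, hx⟩ ⟨⟨d', ⟨⟨a', b'⟩, hab'⟩⟩, _⟩ h
    have hd : d ≠ 0 := by rintro rfl; simp [hg0] at hx
    obtain ⟨rfl, rfl, rfl⟩ := Nat.eq_and_eq_and_eq_of_mul_coprime hd hab hab'
      (congrArg Prod.fst h) (congrArg Prod.snd h)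
    rfl
  · rintro ⟨m, n⟩ hmn
    have hm : m ≠ 0 := by rintro rfl; simp [hg0] at hmn
    have hgcd : 0 < m.gcd n := Nat.gcd_pos_of_pos_left n (Nat.pos_of_ne_zero hm)
    let x : ℕ × {p : ℕ × ℕ // p.1.Coprime p.2} :=
      (m.gcd n, ⟨(m / m.gcd n, n / m.gcd n), Nat.coprime_div_gcd_div_gcd hgcd⟩)
    have hx : (x.1 * x.2.1.1, x.1 * x.2.1.2) = (m, n) := by
      simp [x, Nat.mul_div_cancel' (Nat.gcd_dvd_left m n),
        Nat.mul_div_cancel' (Nat.gcd_dvd_right m n)]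
    refine ⟨⟨x, ?_⟩, hx⟩
    rw [Function.mem_support, ← hscale]
    exact (congrArg (fun p : ℕ × ℕ => g p.1 * g p.2) hx).trans_ne hmn

theorem tsum_indicator_odd_one_div_pow {k : ℕ} (hk : 1 < k) :
    ∑' n : ℕ, {n | Odd n}.indicator (fun n : ℕ => 1 / (n : ℝ) ^ k) n =
      (1 - 2⁻¹ ^ k) * ∑' n : ℕ, 1 / (n : ℝ) ^ k := by
  set f : ℕ → ℝ := fun n => 1 / (n : ℝ) ^ k
  have hf : Summable f := Real.summable_one_div_nat_pow.mpr hk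
  have hfeven : Summable fun n => f (2 * n) :=
    hf.comp_injective (mul_right_injective₀ two_ne_zero)
  have hfodd : Summable fun n => f (2 * n + 1) :=
    hf.comp_injective fun m n h => by simpa using h
  have hf_two_mul : ∀ n, f (2 * n) = 2⁻¹ ^ k * f n := fun n => by
    simp only [f]; push_cast; rw [mul_pow, inv_pow, one_div, one_div, mul_inv]
  have hind_even : ∀ n, {n | Odd n}.indicator f (2 * n) = 0 := fun n =>
    indicator_of_notMem (by simp) f
  have hind_odd : ∀ n, {n | Odd n}.indicator f (2 * n + 1) = f (2 * n + 1) := fun n =>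
    indicator_of_mem (by simp) f
  have hsplit := tsum_even_add_odd hfeven hfodd
  rw [← tsum_even_add_odd (f := {n | Odd n}.indicator f)
    (by simp only [hind_even]; exact summable_zero) (by simpa only [hind_odd] using hfodd)]
  simp only [hind_even, hind_odd, hf_two_mul, tsum_zero, tsum_mul_left] at hsplit ⊢
  linear_combination hsplit

theorem tsum_coprime_one_div_sq_mul_one_div_sq :
    ∑' p : {p : ℕ × ℕ // p.1.Coprime p.2}, 1 / (p.1.1 : ℝ) ^ 2 * (1 / (p.1.2 : ℝ) ^ 2) =
      5 / 2 := by
  have h := tsum_sq_mul_tsum_coprime (g := fun n : ℕ => 1 / (n : ℝ) ^ 2) (by simp)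
    (fun m n => by push_cast; rw [mul_pow, one_div_mul_one_div]) (fun n => by positivity)
    (Real.summable_one_div_nat_pow.mpr one_lt_two)
  have hsq : (fun n : ℕ => (1 / (n : ℝ) ^ 2) ^ 2) = fun n : ℕ => 1 / (n : ℝ) ^ 4 := by
    funext n; ring
  rw [hsq, hasSum_zeta_four.tsum_eq, hasSum_zeta_two.tsum_eq] at h
  exact mul_left_cancel₀ (pow_ne_zero 4 Real.pi_ne_zero) (by linear_combination 90 * h)

theorem tsum_coprime_indicator_odd_one_div_sq_mul :
    ∑' p : {p : ℕ × ℕ // p.1.Coprime p.2},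
      {n | Odd n}.indicator (fun n : ℕ => 1 / (n : ℝ) ^ 2) p.1.1 *
        {n | Odd n}.indicator (fun n : ℕ => 1 / (n : ℝ) ^ 2) p.1.2 = 3 / 2 := by
  have h := tsum_sq_mul_tsum_coprime (g := {n | Odd n}.indicator fun n : ℕ => 1 / (n : ℝ) ^ 2)
    (by simp) (fun m n => by
      by_cases hm : Odd m <;> by_cases hn : Odd n <;>
        simp [indicator, Nat.odd_mul, hm, hn, mul_pow, mul_comm])
    (fun n => indicator_nonneg (fun n _ => by positivity) n)
    ((Real.summable_one_div_nat_pow.mpr one_lt_two).indicator _)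
  have hsq : (fun n : ℕ => ({n | Odd n}.indicator (fun n : ℕ => 1 / (n : ℝ) ^ 2) n) ^ 2) =
      {n | Odd n}.indicator fun n : ℕ => 1 / (n : ℝ) ^ 4 := by
    funext n; by_cases hn : Odd n <;> simp [indicator, hn]; ring
  rw [hsq, tsum_indicator_odd_one_div_pow (by norm_num : 1 < 4),
    tsum_indicator_odd_one_div_pow one_lt_two, hasSum_zeta_four.tsum_eq,
    hasSum_zeta_two.tsum_eq] at h
  exact mul_left_cancel₀ (pow_ne_zero 4 Real.pi_ne_zero) (by linear_combination 96 * h)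

theorem mul_sub_indicator_odd_mul_indicator_odd (g : ℕ → ℝ) {a b : ℕ} (hab : a.Coprime b) :
    g a * g b - {n | Odd n}.indicator g a * {n | Odd n}.indicator g b =
      if Odd (a + b) then g a * g b else 0 := by
  rcases Nat.even_or_odd a with ha | ha <;> rcases Nat.even_or_odd b with hb | hb
  · exact absurd hab (Nat.not_coprime_of_dvd_of_dvd one_lt_two ha.two_dvd hb.two_dvd)
  · simp [ha.add_odd hb, Nat.not_odd_iff_even.mpr ha]
  · simp [ha.add_even hb, Nat.not_odd_iff_even.mpr hb]
  · simp [ha, hb, Nat.not_odd_iff_even.mpr (ha.add_odd hb)]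

theorem tsum_coprime_odd_add_eq_tsum_coprime_sub {g : ℕ → ℝ} (hg0 : g 0 = 0) :
    ∑' p : {p : ℕ × ℕ // 0 < p.1 ∧ 0 < p.2 ∧ p.1.Coprime p.2 ∧ Odd (p.1 + p.2)},
      g p.1.1 * g p.1.2 =
    ∑' p : {p : ℕ × ℕ // p.1.Coprime p.2},
      (g p.1.1 * g p.1.2 - {n | Odd n}.indicator g p.1.1 * {n | Odd n}.indicator g p.1.2) := by
  refine (tsum_subtype {p : ℕ × ℕ | _} fun p => g p.1 * g p.2).trans <|
    (tsum_congr fun p => ?_).trans (tsum_subtype {p : ℕ × ℕ | p.1.Coprime p.2}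
      fun p => g p.1 * g p.2 - {n | Odd n}.indicator g p.1 * {n | Odd n}.indicator g p.2).symm
  obtain ⟨a, b⟩ := p
  by_cases hab : a.Coprime b
  · rw [indicator_of_mem (show (a, b) ∈ {p : ℕ × ℕ | p.1.Coprime p.2} from hab),
      mul_sub_indicator_odd_mul_indicator_odd g hab]
    rcases Nat.eq_zero_or_pos a with rfl | ha
    · simp [hg0]
    rcases Nat.eq_zero_or_pos b with rfl | hb
    · simp [hg0]
    simp only [indicator, mem_ofPred_eq, ha, hb, true_and]
    exact if_congr (and_iff_right hab) rfl rfl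
  · simp [hab]

/-- The sum of `1/(a²b²)` over all pairs of coprime positive integers
`(a,b)` of opposite parity (`a + b` odd) equals `1`. -/
theorem tsum_coprime_mixed_parity_inv_sq_sq :
    ∑' p : {p : ℕ × ℕ // 0 < p.1 ∧ 0 < p.2 ∧ Nat.Coprime p.1 p.2 ∧ Odd (p.1 + p.2)},
      (1 : ℝ) / ((p.val.1 : ℝ) ^ 2 * (p.val.2 : ℝ) ^ 2) = 1 := by
  have hg : Summable fun n : ℕ => 1 / (n : ℝ) ^ 2 :=
    Real.summable_one_div_nat_pow.mpr one_lt_two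
  have hnn : 0 ≤ fun n : ℕ => 1 / (n : ℝ) ^ 2 := fun n => by positivity
  simp_rw [← one_div_mul_one_div]
  refine (tsum_coprime_odd_add_eq_tsum_coprime_sub (g := fun n : ℕ => 1 / (n : ℝ) ^ 2)
    (by simp)).trans ?_
  rw [(summable_coprime_mul hnn hg).tsum_sub
      (summable_coprime_mul (indicator_nonneg fun n _ => hnn n) (hg.indicator _)),
    tsum_coprime_one_div_sq_mul_one_div_sq, tsum_coprime_indicator_odd_one_div_sq_mul]
  norm_num
end

section
/- Let a and b be coprime positive integers. Define T(n) = ∑ kℓ, the sum over all pairs (k,ℓ) of positive integers with ak + bℓ = n. Then T(n) is asymptotically equivalent to n³/(6a²b²) as n → ∞, i.e. T(n)·6a²b²/n³ → 1. -/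
/-!
By coprimality, the positive solutions of `a k + b ℓ = n` form the progression
`(r + b j, L - a j)`, `0 ≤ j < ⌈L / a⌉`, where `(r, L)` is the solution with `0 < r ≤ b`.
So `T(n)` sums a quadratic polynomial in `j` over an initial segment and has a closed form.
As `r = O(1)`, `L ~ n / b` and `⌈L / a⌉ ~ n / (a b)`, its leading term is
`b (n / b) (n / (a b))² / 2 - a b (n / (a b))³ / 3 = n³ / (6 a² b²)`.
-/

open Filter Finset Topology

theorem lt_add_sub_one_div_iff {a : ℕ} (ha : 0 < a) (j L : ℕ) :
    j < (L + a - 1) / a ↔ a * j < L := by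
  rw [← Nat.succ_le_iff, Nat.le_div_iff_mul_le ha, Nat.succ_mul, mul_comm]
  omega

namespace Nat.Coprime

variable {a b : ℕ}

theorem exists_pos_le_mul_modEq (hab : a.Coprime b) (hb : 0 < b) (n : ℕ) :
    ∃ r, 0 < r ∧ r ≤ b ∧ a * r ≡ n [MOD b] := by
  have : NeZero b := ⟨hb.ne'⟩
  -- Shifting by one picks the representative of `n / a` in `[1, b]` rather than `[0, b)`.
  set x : ZMod b := n * (a : ZMod b)⁻¹ - 1 with hx
  refine ⟨x.val + 1, x.val.succ_pos, x.val_lt, ?_⟩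
  rw [← ZMod.natCast_eq_natCast_iff]
  push_cast
  rw [ZMod.natCast_zmod_val, hx, sub_add_cancel, mul_left_comm, ZMod.coe_mul_inv_eq_one _ hab,
    mul_one]

theorem exists_eq_add_mul_of_mul_add_mul_eq (hab : a.Coprime b) {r L k l : ℕ} (hr : 0 < r)
    (hrb : r ≤ b) (hk : 0 < k) (h : a * k + b * l = a * r + b * L) :
    ∃ j, k = r + b * j ∧ l + a * j = L := by
  have hz : (a : ℤ) * k + b * l = a * r + b * L := by exact_mod_cast h
  obtain ⟨t, ht⟩ : (b : ℤ) ∣ k - r :=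
    (Nat.isCoprime_iff_coprime.mpr hab.symm).dvd_of_dvd_mul_left ⟨L - l, by linear_combination hz⟩
  have ht0 : 0 ≤ t := by
    by_contra! ht_neg
    nlinarith
  lift t to ℕ using ht0
  refine ⟨t, by omega, ?_⟩
  have : (b : ℤ) * (l + a * t) = b * L := by linear_combination hz - a * ht
  exact_mod_cast mul_left_cancel₀ (by omega) this

theorem filter_mul_add_mul_eq (hab : a.Coprime b) (ha : 0 < a) {r L n : ℕ} (hr : 0 < r)
    (hrb : r ≤ b) (hn : a * r + b * L = n) :
    (Ioc 0 n ×ˢ Ioc 0 n).filter (fun p : ℕ × ℕ => a * p.1 + b * p.2 = n) =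
      (range ((L + a - 1) / a)).image fun j => (r + b * j, L - a * j) := by
  ext ⟨k, l⟩
  simp only [mem_filter, mem_product, mem_Ioc, mem_image, mem_range, lt_add_sub_one_div_iff ha,
    Prod.mk.injEq]
  constructor
  · rintro ⟨⟨⟨hk, -⟩, hl, -⟩, h⟩
    obtain ⟨j, rfl, rfl⟩ := hab.exists_eq_add_mul_of_mul_add_mul_eq hr hrb hk (h.trans hn.symm)
    exact ⟨j, by omega, rfl, by omega⟩
  · rintro ⟨j, hj, rfl, rfl⟩
    refine ⟨⟨⟨by omega, ?_⟩, by omega, ?_⟩, ?_⟩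
    · nlinarith
    · have := Nat.le_mul_of_pos_left L (hr.trans_le hrb)
      omega
    · rw [← hn, Nat.mul_sub, mul_add, mul_left_comm]
      have : b * (a * j) ≤ b * L := Nat.mul_le_mul_left b hj.le
      omega

theorem cast_sum_filter_mul_add_mul_eq {R : Type*} [CommRing R] (hab : a.Coprime b) (ha : 0 < a)
    {r L n : ℕ} (hr : 0 < r) (hrb : r ≤ b) (hn : a * r + b * L = n) :
    ((∑ p ∈ (Ioc 0 n ×ˢ Ioc 0 n).filter (fun p : ℕ × ℕ => a * p.1 + b * p.2 = n), p.1 * p.2 :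
        ℕ) : R) =
      ∑ j ∈ range ((L + a - 1) / a), ((r : R) + b * j) * (L - a * j) := by
  have hb : 0 < b := hr.trans_le hrb
  rw [hab.filter_mul_add_mul_eq ha hr hrb hn, sum_image fun x _ y _ h =>
    Nat.eq_of_mul_eq_mul_left hb (by simp only [Prod.mk.injEq] at h; omega), Nat.cast_sum]
  refine sum_congr rfl fun j hj => ?_
  rw [mem_range, lt_add_sub_one_div_iff ha] at hj
  rw [Nat.cast_mul, Nat.cast_sub hj.le]
  push_cast
  ring

end Nat.Coprime

theorem sum_range_add_mul_mul_sub_mul {K : Type*} [Field K] [CharZero K] (r s c d : K)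
    (m : ℕ) :
    ∑ j ∈ range m, (r + c * j) * (s - d * j) =
      m * r * s + (c * s - d * r) * (m * (m - 1) / 2) -
        c * d * (m * (m - 1) * (2 * m - 1) / 6) := by
  induction m with
  | zero => simp
  | succ m ih => rw [sum_range_succ, ih]; push_cast; ring

theorem tendsto_sum_range_add_mul_mul_sub_mul_div_pow_three {r s : ℕ → ℝ} {m : ℕ → ℕ}
    {c d σ μ : ℝ} (hr : Tendsto (fun n => r n / n) atTop (𝓝 0))
    (hs : Tendsto (fun n => s n / n) atTop (𝓝 σ))
    (hm : Tendsto (fun n => (m n : ℝ) / n) atTop (𝓝 μ)) :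
    Tendsto (fun n => (∑ j ∈ range (m n), (r n + c * j) * (s n - d * j)) / (n : ℝ) ^ 3) atTop
      (𝓝 (c * σ * μ ^ 2 / 2 - c * d * μ ^ 3 / 3)) := by
  have he := tendsto_inv_atTop_nhds_zero_nat (𝕜 := ℝ)
  have hm' := hm.mul (hm.sub he)
  have key := ((hm.mul hr).mul hs).add
    ((((hs.const_mul c).sub (hr.const_mul d)).mul hm').div_const 2) |>.sub (((hm'.mul ((hm.const_mul 2).sub he)).const_mul (c * d)).div_const 6)
  convert key.congr' ?_ using 2
  · ring
  filter_upwards [eventually_ne_atTop 0] with n hn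
  rw [sum_range_add_mul_mul_sub_mul]
  field_simp

theorem tendsto_add_sub_one_div_div_natCast {x : ℕ → ℕ} {a : ℕ} {σ : ℝ} (ha : 0 < a)
    (hx : Tendsto (fun n => (x n : ℝ) / n) atTop (𝓝 σ)) :
    Tendsto (fun n => (((x n + a - 1) / a : ℕ) : ℝ) / n) atTop (𝓝 (σ / a)) := by
  have ha' : (0 : ℝ) < a := by exact_mod_cast ha
  have hbounds (n : ℕ) : (x n : ℝ) / a ≤ ((x n + a - 1) / a : ℕ) ∧
      (((x n + a - 1) / a : ℕ) : ℝ) ≤ x n / a + 1 := by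
    rw [div_le_iff₀ ha', div_add_one ha'.ne', le_div_iff₀ ha']
    have := Nat.div_add_mod' (x n + a - 1) a
    have := Nat.mod_lt (x n + a - 1) ha
    constructor <;> norm_cast <;> omega
  have hup := (hx.div_const a).add (tendsto_one_div_atTop_nhds_zero_nat (𝕜 := ℝ))
  rw [add_zero] at hup
  refine tendsto_of_tendsto_of_tendsto_of_le_of_le (hx.div_const a) hup (fun n => ?_) fun n => ?_
  · rw [div_right_comm]
    exact div_le_div_of_nonneg_right (hbounds n).1 n.cast_nonneg
  · rw [div_right_comm, ← add_div]
    exact div_le_div_of_nonneg_right (hbounds n).2 n.cast_nonneg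

theorem tendsto_div_natCast_of_mul_add_mul_eq {r L : ℕ → ℕ} {a b : ℕ} (hb : 0 < b)
    (hr : Tendsto (fun n => (r n : ℝ) / n) atTop (𝓝 0))
    (h : ∀ᶠ n in atTop, a * r n + b * L n = n) :
    Tendsto (fun n => (L n : ℝ) / n) atTop (𝓝 (1 / b)) := by
  have := ((hr.const_mul (a : ℝ)).const_sub 1).div_const (b : ℝ)
  rw [mul_zero, sub_zero] at this
  refine this.congr' ?_
  filter_upwards [h, eventually_ne_atTop 0] with n hn hn0
  have : (a : ℝ) * r n + b * L n = n := by exact_mod_cast hn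
  field_simp
  linarith

/-- For coprime positive integers `a, b`, the sum
`T(n) = ∑_{k,ℓ ≥ 1, ak + bℓ = n} kℓ` satisfies `T(n) ~ n³/(6a²b²)` as `n → ∞`. -/
theorem two_var_weighted_partition_asymptotics (a b : ℕ) (ha : 0 < a) (hb : 0 < b)
    (hab : Nat.Coprime a b) :
    Tendsto
      (fun n : ℕ =>
        ((∑ p ∈ (Finset.Ioc 0 n ×ˢ Finset.Ioc 0 n).filter
            (fun p : ℕ × ℕ => a * p.1 + b * p.2 = n), p.1 * p.2 : ℕ) : ℝ)
          * (6 * (a : ℝ) ^ 2 * (b : ℝ) ^ 2) / (n : ℝ) ^ 3)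
      atTop (nhds 1) := by
  choose r hr0 hrb hrn using hab.exists_pos_le_mul_modEq hb
  set L : ℕ → ℕ := fun n => (n - a * r n) / b
  have hrL : ∀ n ≥ a * b, a * r n + b * L n = n := fun n hn => by
    have hle : a * r n ≤ n := (Nat.mul_le_mul_left a (hrb n)).trans hn
    have := Nat.mul_div_cancel' ((Nat.modEq_iff_dvd' hle).mp (hrn n))
    simp only [L]
    omega
  have hr : Tendsto (fun n => (r n : ℝ) / n) atTop (𝓝 0) :=
    tendsto_bdd_div_atTop_nhds_zero (b := 0) (B := b) (.of_forall fun n => by positivity)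
      (.of_forall fun n => by exact_mod_cast hrb n) tendsto_natCast_atTop_atTop
  have hL := tendsto_div_natCast_of_mul_add_mul_eq hb hr (eventually_atTop.mpr ⟨a * b, hrL⟩)
  have hT := (tendsto_sum_range_add_mul_mul_sub_mul_div_pow_three (c := b) (d := a) hr hL
    (tendsto_add_sub_one_div_div_natCast ha hL)).const_mul (6 * (a : ℝ) ^ 2 * (b : ℝ) ^ 2)
  convert hT.congr' ?_ using 2
  · field_simp
    ring
  filter_upwards [eventually_ge_atTop (a * b)] with n hn
  rw [hab.cast_sum_filter_mul_add_mul_eq ha (hr0 n) (hrb n) (hrL n hn)]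
  ring
end

section
/- Let a and b be coprime positive integers with a + b odd. Define T'(n) = ∑ kℓ, the sum over all pairs (k,ℓ) of odd positive integers with ak + bℓ = n. Then, as n → ∞ along odd integers n, T'(n) is asymptotically equivalent to n³/(12a²b²), i.e. T'(n)·12a²b²/n³ → 1 along the filter of odd n tending to infinity. -/
open Finset

lemma sumsq (T : ℕ) : 6 * ∑ i ∈ Finset.range (T+1), i^2 = T*(T+1)*(2*T+1) := by
  induction T with
  | zero => simp
  | succ m ih =>
    rw [Finset.sum_range_succ, Nat.mul_add, ih]; ring

lemma sumid (T : ℕ) : 2 * ∑ i ∈ Finset.range (T+1), i = T*(T+1) := by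
  rw [mul_comm, Finset.sum_range_id_mul_two, Nat.add_sub_cancel]; ring

lemma int_closed (P Q A B : ℤ) (T : ℕ) :
    6 * ∑ t ∈ Finset.range (T+1), (P + 2*B*t)*(Q + 2*A*((T:ℤ) - t))
    = 6*(T+1)*P*Q + 6*(A*P+B*Q)*(T:ℤ)*(T+1) + 4*A*B*((T:ℤ)-1)*T*(T+1) := by
  have h1 : (2:ℤ) * ∑ i ∈ Finset.range (T+1), (i:ℤ) = T*(T+1) := by
    have := congrArg (fun x : ℕ => (x:ℤ)) (sumid T); push_cast at this; linarith
  have h2 : (6:ℤ) * ∑ i ∈ Finset.range (T+1), (i:ℤ)^2 = T*(T+1)*(2*T+1) := by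
    have := congrArg (fun x : ℕ => (x:ℤ)) (sumsq T); push_cast at this; linarith
  have expand : ∀ t : ℕ, (P + 2*B*(t:ℤ))*(Q + 2*A*((T:ℤ) - t))
      = (P*Q + 2*A*P*(T:ℤ)) + (2*B*Q - 2*A*P + 4*A*B*(T:ℤ))*(t:ℤ) - 4*A*B*(t:ℤ)^2 := by
    intro t; ring
  simp only [expand]
  rw [Finset.sum_sub_distrib, Finset.sum_add_distrib, Finset.sum_const, ← Finset.mul_sum,
    ← Finset.mul_sum, Finset.card_range]
  push_cast
  linear_combination (6*B*Q - 6*A*P + 12*A*B*(T:ℤ)) * h1 - (4:ℤ)*A*B*h2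

lemma shift (a b : ℕ) (hab : Nat.Coprime a b) (hparity : Odd (a+b)) (hb : 0 < b)
    (k l p L : ℤ) (hk : Odd k) (hp : Odd p) (hl : Odd l) (hL : Odd L)
    (h1 : a*k + b*l = a*p + b*L) :
    ∃ m : ℤ, k = p + 2*b*m ∧ l = L - 2*a*m := by
  have hco : IsCoprime (a:ℤ) (b:ℤ) := Nat.isCoprime_iff_coprime.mpr hab
  have h2 : (a:ℤ)*(k-p) = b*(L-l) := by ring_nf; linarith [h1]
  have hdvd : (b:ℤ) ∣ (k - p) :=
    hco.symm.dvd_of_dvd_mul_left ⟨L - l, h2.symm ▸ by ring⟩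
  obtain ⟨c, hc⟩ := hdvd
  have hbz : (b:ℤ) ≠ 0 := by exact_mod_cast hb.ne'
  have hac : (a:ℤ)*c = L - l := by
    have : (b:ℤ) * ((a:ℤ)*c) = b * (L - l) := by rw [← h2, hc]; ring
    exact mul_left_cancel₀ hbz this
  have hceven : Even c := by
    have hkp : Even (k - p) := hk.sub_odd hp
    have hLl : Even (L - l) := hL.sub_odd hl
    rcases Nat.even_or_odd b with hbe | hbo
    · have hao : Odd a := by
        rcases Nat.odd_add.mp hparity with h
        exact h.mpr hbe
      have : Even ((a:ℤ)*c) := hac ▸ hLl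
      rcases Int.even_mul.mp this with h | h
      · exact absurd h (by simpa [Int.even_coe_nat] using (Nat.not_even_iff_odd.mpr hao))
      · exact h
    · have : Even ((b:ℤ)*c) := hc ▸ hkp
      rcases Int.even_mul.mp this with h | h
      · exact absurd h (by simpa [Int.even_coe_nat] using (Nat.not_even_iff_odd.mpr hbo))
      · exact h
  obtain ⟨m, hm⟩ := hceven
  refine ⟨m, by rw [hm] at hc; linarith [hc, mul_add (b:ℤ) m m], by rw [hm] at hac; linarith [hac, mul_add (a:ℤ) m m]⟩

lemma exist_sol_aux (a b n : ℕ) (ha : Odd a) (hb : 0 < b) (hbe : Even b)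
    (hab : Nat.Coprime a b) (hn : Odd n) (hlarge : 2*a*b + b ≤ n) :
    ∃ k l : ℕ, Odd k ∧ Odd l ∧ a*k + b*l = n := by
  haveI : NeZero (2*b) := ⟨by omega⟩
  have hco2 : Nat.Coprime a (2*b) :=
    Nat.Coprime.mul_right (ha.coprime_two_right) hab
  set u := ZMod.unitOfCoprime a hco2 with hu
  set k : ℕ := (((u⁻¹ : (ZMod (2*b))ˣ) : ZMod (2*b)) * ((n - b : ℕ) : ZMod (2*b))).val with hkdef
  have hblen : b ≤ n := by omega
  have hcast : ((a * k : ℕ) : ZMod (2*b)) = ((n - b : ℕ) : ZMod (2*b)) := by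
    push_cast [hkdef]
    rw [ZMod.natCast_val, ZMod.cast_id]
    have hau : (a : ZMod (2*b)) = u := rfl
    rw [hau, ← mul_assoc, Units.mul_inv, one_mul]
  have hmod : a * k ≡ (n - b) [MOD 2*b] := (ZMod.natCast_eq_natCast_iff _ _ _).mp hcast
  have hklt : k < 2*b := ZMod.val_lt _
  -- k odd
  have hnb : Odd (n - b) := Nat.Odd.sub_even hblen hn hbe
  have hmod2 : (a * k) % 2 = (n - b) % 2 := hmod.of_dvd ⟨b, rfl⟩
  have hak : Odd (a * k) := by rw [Nat.odd_iff] at hnb ⊢; omega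
  have hk : Odd k := (Nat.odd_mul.mp hak).2
  -- now l
  have h0a : 0 < a := ha.pos
  have hle : a * k ≤ n - b := by
    have h1 : a*(k+1) ≤ a*(2*b) := Nat.mul_le_mul_left a (by omega)
    have h2 : a*(2*b) = 2*a*b := by ring
    have h3 : a*(k+1) = a*k + a := by ring
    omega
  obtain ⟨m, hm⟩ := (Nat.modEq_iff_dvd' hle).mp hmod
  refine ⟨k, 2*m+1, hk, ⟨m, by ring⟩, ?_⟩
  have e1 : b*(2*m+1) = 2*(b*m) + b := by ring
  have hm' : n - b - a*k = 2*(b*m) := by rw [hm]; ring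
  omega

lemma exist_sol (a b n : ℕ) (ha : 0 < a) (hb : 0 < b) (hab : Nat.Coprime a b)
    (hparity : Odd (a+b)) (hn : Odd n) (hlarge : 2*a*b + a + b ≤ n) :
    ∃ k l : ℕ, Odd k ∧ Odd l ∧ a*k + b*l = n := by
  rcases Nat.even_or_odd a with hae | hao
  · have hbo : Odd b := by
      rw [Nat.odd_iff] at hparity ⊢; rw [Nat.even_iff] at hae; omega
    obtain ⟨k, l, hk, hl, he⟩ := exist_sol_aux b a n hbo ha hae hab.symm hn
      (by have h : 2*b*a = 2*a*b := by ring
          omega)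
    exact ⟨l, k, hl, hk, by omega⟩
  · have hbe : Even b := by
      rw [Nat.odd_iff] at hparity hao; rw [Nat.even_iff]; omega
    exact exist_sol_aux a b n hao hb hbe hab hn (by omega)

set_option maxHeartbeats 1000000 in
lemma estimate' (A B P Q T N S : ℤ)
    (hA : 1 ≤ A) (hB : 1 ≤ B) (hP1 : 1 ≤ P) (hP2 : P ≤ 2*B) (hQ1 : 1 ≤ Q) (hQ2 : Q ≤ 2*A)
    (hT : 0 ≤ T)
    (hN : N = 2*A*B*T + (A*P + B*Q))
    (h6 : 6*S = 6*(T+1)*P*Q + 6*(A*P+B*Q)*T*(T+1) + 4*A*B*(T-1)*T*(T+1)) :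
    |12*A^2*B^2*S - N^3| ≤ 1272*A^3*B^3*N^2 := by
  have hc4 : A*P + B*Q ≤ 4*A*B := by nlinarith
  have hc0 : (2:ℤ) ≤ A*P + B*Q := by nlinarith
  set c : ℤ := A*P + B*Q with hc
  have hE : 6*(12*A^2*B^2*S - N^3)
      = (72*A^2*B^2*c + 72*A^2*B^2*(P*Q) - 48*A^3*B^3 - 36*A*B*c^2)*T
        + 72*A^2*B^2*(P*Q) - 6*c^3 := by
    linear_combination (12*A^2*B^2) * h6
      - (6*(N^2 + N*(2*A*B*T + c) + (2*A*B*T + c)^2)) * hN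
  have hPQ4 : P*Q ≤ 4*A*B := by nlinarith
  have hPQ0 : (1:ℤ) ≤ P*Q := by nlinarith
  have habT : 2*A*B*T ≤ N := by nlinarith
  have hN1 : (1:ℤ) ≤ N := by nlinarith
  have hab1 : (1:ℤ) ≤ A*B := by nlinarith
  have hc2 : c^2 ≤ 16*A^2*B^2 := by
    have hco : (0:ℤ) ≤ (4*A*B - c) * (4*A*B + c) :=
      mul_nonneg (by linarith) (by linarith)
    nlinarith [hco]
  have hc3 : c^3 ≤ 64*A^3*B^3 := by
    have s1 : c^3 ≤ 4*A*B*c^2 := by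
      have := mul_le_mul_of_nonneg_right hc4 (show (0:ℤ) ≤ c^2 by positivity)
      nlinarith [this]
    have s2 : 4*A*B*c^2 ≤ 4*A*B*(16*A^2*B^2) := mul_le_mul_of_nonneg_left hc2 (by positivity)
    nlinarith [s1, s2]
  have f1 : 72*A^2*B^2*c*T ≤ 288*A^3*B^3*T := by
    have := mul_le_mul_of_nonneg_left hc4 (show (0:ℤ) ≤ 72*A^2*B^2*T by positivity)
    linarith
  have f2 : 72*A^2*B^2*(P*Q)*T ≤ 288*A^3*B^3*T := by
    have := mul_le_mul_of_nonneg_left hPQ4 (show (0:ℤ) ≤ 72*A^2*B^2*T by positivity)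
    linarith
  have f3 : 72*A^2*B^2*(P*Q) ≤ 288*A^3*B^3 := by
    have := mul_le_mul_of_nonneg_left hPQ4 (show (0:ℤ) ≤ 72*A^2*B^2 by positivity)
    linarith
  have f4 : 36*A*B*c^2*T ≤ 576*A^3*B^3*T := by
    have := mul_le_mul_of_nonneg_left hc2 (show (0:ℤ) ≤ 36*A*B*T by positivity)
    linarith
  have f5 : 6*c^3 ≤ 384*A^3*B^3 := by linarith
  have f6 : 1272*A^3*B^3*T = 636*A^2*B^2*(2*A*B*T) := by ring
  have f7 : 636*A^2*B^2*(2*A*B*T) ≤ 636*A^2*B^2*N :=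
    mul_le_mul_of_nonneg_left habT (by positivity)
  have f8 : 636*A^2*B^2*N ≤ 636*A^3*B^3*N := by
    have := mul_le_mul_of_nonneg_left hab1 (show (0:ℤ) ≤ 636*A^2*B^2*N by positivity)
    linarith
  have f9 : 636*A^3*B^3*N ≤ 636*A^3*B^3*N^2 := by
    have := mul_le_mul_of_nonneg_left hN1 (show (0:ℤ) ≤ 636*A^3*B^3*N by positivity)
    linarith
  have hN2 : (1:ℤ) ≤ N^2 := by nlinarith
  have f10 : 384*A^3*B^3 ≤ 384*A^3*B^3*N^2 := by
    have := mul_le_mul_of_nonneg_left hN2 (show (0:ℤ) ≤ 384*A^3*B^3 by positivity)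
    linarith
  have f11 : 288*A^3*B^3 ≤ 288*A^3*B^3*N^2 := by
    have := mul_le_mul_of_nonneg_left hN2 (show (0:ℤ) ≤ 288*A^3*B^3 by positivity)
    linarith
  have f12 : (0:ℤ) ≤ 48*A^3*B^3*T := by positivity
  have f13 : (0:ℤ) ≤ 36*A*B*c^2*T := by positivity
  have f14 : (0:ℤ) ≤ 6*c^3 := by
    have : (0:ℤ) ≤ c := by linarith
    positivity
  have f15 : (0:ℤ) ≤ 72*A^2*B^2*c*T := by
    have hcn : (0:ℤ) ≤ c := by linarith
    positivity
  have f16 : (0:ℤ) ≤ 72*A^2*B^2*(P*Q)*T := by positivity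
  have f17 : (0:ℤ) ≤ 72*A^2*B^2*(P*Q) := by positivity
  rw [abs_le]
  constructor
  · linarith [hE, f4, f5, f6, f7, f8, f9, f10, f15, f16, f17, f12]
  · linarith [hE, f1, f2, f3, f6, f7, f8, f9, f11, f12, f13, f14]

set_option maxHeartbeats 2000000 in
lemma key (a b : ℕ) (ha : 0 < a) (hb : 0 < b) (hab : Nat.Coprime a b)
    (hparity : Odd (a + b)) (n : ℕ) (hn : Odd n) (hlarge : 2*a*b + a + b ≤ n) :
    ∃ p q T : ℕ, Odd p ∧ Odd q ∧ 1 ≤ p ∧ p ≤ 2*b ∧ 1 ≤ q ∧ q ≤ 2*a ∧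
      n = 2*a*b*T + (a*p + b*q) ∧
      ∑ pr ∈ (Finset.Ioc 0 n ×ˢ Finset.Ioc 0 n).filter
          (fun pr : ℕ × ℕ => Odd pr.1 ∧ Odd pr.2 ∧ a*pr.1 + b*pr.2 = n), pr.1 * pr.2
        = ∑ t ∈ Finset.range (T+1), (p + 2*b*t) * (q + 2*a*(T - t)) := by
  obtain ⟨k₀, l₀, hk₀, hl₀, he₀⟩ := exist_sol a b n ha hb hab hparity hn hlarge
  have hk₀1 : 1 ≤ k₀ := hk₀.pos
  obtain ⟨j, r, hrlt, hdec⟩ : ∃ j r, r < 2*b ∧ k₀ - 1 = 2*(b*j) + r :=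
    ⟨(k₀-1)/(2*b), (k₀-1)%(2*b), Nat.mod_lt _ (by omega), by
      have h := Nat.div_add_mod (k₀-1) (2*b)
      rw [show 2*b*((k₀-1)/(2*b)) = 2*(b*((k₀-1)/(2*b))) from by ring] at h
      omega⟩
  obtain ⟨p, hpdef⟩ : ∃ p, p = r + 1 := ⟨r+1, rfl⟩
  have hk₀p : k₀ = p + 2*(b*j) := by omega
  have hp1 : 1 ≤ p := by omega
  have hp2 : p ≤ 2*b := by omega
  have hpodd : Odd p := by
    rw [Nat.odd_iff] at hk₀ ⊢; omega
  obtain ⟨L, hLdef⟩ : ∃ L, L = l₀ + 2*(a*j) := ⟨_, rfl⟩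
  have hLodd : Odd L := by
    rw [Nat.odd_iff] at hl₀ ⊢; omega
  have heL : n = a*p + b*L := by
    have e1 : a*k₀ = a*p + 2*(a*b*j) := by rw [hk₀p]; ring
    have e2 : b*L = b*l₀ + 2*(a*b*j) := by rw [hLdef]; ring
    omega
  have hL1 : 1 ≤ L := hLodd.pos
  obtain ⟨T, s, hslt, hdec2⟩ : ∃ T s, s < 2*a ∧ L - 1 = 2*(a*T) + s :=
    ⟨(L-1)/(2*a), (L-1)%(2*a), Nat.mod_lt _ (by omega), by
      have h := Nat.div_add_mod (L-1) (2*a)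
      rw [show 2*a*((L-1)/(2*a)) = 2*(a*((L-1)/(2*a))) from by ring] at h
      omega⟩
  obtain ⟨q, hqdef⟩ : ∃ q, q = s + 1 := ⟨s+1, rfl⟩
  have hLq : L = q + 2*(a*T) := by omega
  have hq1 : 1 ≤ q := by omega
  have hq2 : q ≤ 2*a := by omega
  have hqodd : Odd q := by
    rw [Nat.odd_iff] at hLodd ⊢; omega
  have hneq : n = 2*a*b*T + (a*p + b*q) := by
    have e1 : b*L = b*q + 2*(a*b*T) := by rw [hLq]; ring
    have e2 : 2*a*b*T = 2*(a*b*T) := by ring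
    omega
  refine ⟨p, q, T, hpodd, hqodd, hp1, hp2, hq1, hq2, hneq, ?_⟩
  have hset : (Finset.Ioc 0 n ×ˢ Finset.Ioc 0 n).filter
          (fun pr : ℕ × ℕ => Odd pr.1 ∧ Odd pr.2 ∧ a*pr.1 + b*pr.2 = n)
      = (Finset.range (T+1)).image (fun t => (p + 2*b*t, q + 2*a*(T - t))) := by
    ext ⟨k, l⟩
    simp only [Finset.mem_filter, Finset.mem_product, Finset.mem_Ioc, Finset.mem_image,
      Finset.mem_range, Prod.mk.injEq]
    constructor
    · rintro ⟨⟨⟨hk0, hkn⟩, ⟨hl0, hln⟩⟩, hkodd, hlodd, heq⟩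
      have hLz : Odd (L:ℤ) := by exact_mod_cast hLodd
      have hpz : Odd (p:ℤ) := by exact_mod_cast hpodd
      have hkz : Odd (k:ℤ) := by exact_mod_cast hkodd
      have hlz : Odd (l:ℤ) := by exact_mod_cast hlodd
      obtain ⟨m, hm1, hm2⟩ := shift a b hab hparity hb k l p L hkz hpz hlz hLz
        (by have c1 : (a:ℤ)*k + b*l = n := by exact_mod_cast heq
            have c2 : (a:ℤ)*p + b*L = n := by exact_mod_cast heL.symm
            linarith)
      have hbz : (0:ℤ) < b := by exact_mod_cast hb
      have haz : (0:ℤ) < a := by exact_mod_cast ha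
      have hm0 : 0 ≤ m := by
        by_contra hneg
        push_neg at hneg
        have hm' : m ≤ -1 := by omega
        have h1 : (k:ℤ) ≤ p - 2*b := by
          have h2bm : 2*(b:ℤ)*m ≤ 2*b*(-1) := by
            have := mul_le_mul_of_nonneg_left hm' (show (0:ℤ) ≤ 2*b by positivity)
            linarith
          rw [hm1]; linarith
        have h2 : (0:ℤ) < k := by exact_mod_cast hk0
        have h3 : (p:ℤ) ≤ 2*b := by exact_mod_cast hp2
        linarith
      have hmT : m ≤ (T:ℤ) := by
        by_contra hgt
        push_neg at hgt
        have hm' : (T:ℤ) + 1 ≤ m := by omega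
        have h1 : (l:ℤ) ≤ L - 2*a*(T+1) := by
          have h2am : 2*(a:ℤ)*(T+1) ≤ 2*a*m := by
            have := mul_le_mul_of_nonneg_left hm' (show (0:ℤ) ≤ 2*a by positivity)
            linarith
          rw [hm2]; linarith
        have h2 : (L:ℤ) = q + 2*a*T := by rw [hLq]; push_cast; ring
        have h3 : (q:ℤ) ≤ 2*a := by exact_mod_cast hq2
        have h4 : (0:ℤ) < l := by exact_mod_cast hl0
        linarith
      have hmn : ((m.toNat : ℤ)) = m := by omega
      refine ⟨m.toNat, by omega, ?_, ?_⟩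
      · have : ((p + 2*b*m.toNat : ℕ) : ℤ) = k := by push_cast [hmn]; linarith [hm1]
        exact_mod_cast this
      · have htT : m.toNat ≤ T := by omega
        have hTt : (((T - m.toNat : ℕ)) : ℤ) = (T:ℤ) - m.toNat := by omega
        have h2 : (L:ℤ) = q + 2*a*T := by rw [hLq]; push_cast; ring
        have : ((q + 2*a*(T - m.toNat) : ℕ) : ℤ) = l := by
          push_cast [hTt, hmn]
          rw [hm2, h2]; ring
        exact_mod_cast this
    · rintro ⟨t, ht, hk, hl⟩
      have htT : t ≤ T := by omega
      obtain ⟨s', hs'⟩ : ∃ s', T = t + s' := ⟨T - t, by omega⟩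
      have hTt : T - t = s' := by omega
      have heq : a*k + b*l = n := by
        rw [← hk, ← hl, hTt]
        have e1 : a*(p + 2*b*t) + b*(q + 2*a*s') = a*p + b*q + 2*(a*b*t) + 2*(a*b*s') := by ring
        have e2 : 2*a*b*T = 2*(a*b*t) + 2*(a*b*s') := by rw [hs']; ring
        omega
      have hkodd : Odd k := by
        rw [← hk]; rw [Nat.odd_iff] at hpodd ⊢
        have e3 : 2*b*t = 2*(b*t) := by ring
        omega
      have hlodd : Odd l := by
        rw [← hl]; rw [Nat.odd_iff] at hqodd ⊢
        have e4 : 2*a*(T-t) = 2*(a*(T-t)) := by ring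
        omega
      have hk0 : 0 < k := by omega
      have hl0 : 0 < l := by omega
      have hkn : k ≤ n := by
        have h1 : k ≤ a*k := Nat.le_mul_of_pos_left k ha
        omega
      have hln : l ≤ n := by
        have h1 : l ≤ b*l := Nat.le_mul_of_pos_left l hb
        omega
      exact ⟨⟨⟨hk0, hkn⟩, hl0, hln⟩, hkodd, hlodd, heq⟩
  rw [hset, Finset.sum_image]
  intro x hx y hy hxy
  simp only [Prod.mk.injEq] at hxy
  have h1 := hxy.1
  have h2b : 0 < 2*b := by omega
  have h2 : 2*b*x = 2*b*y := by omega
  exact Nat.eq_of_mul_eq_mul_left h2b h2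


open Filter

/-- For coprime positive integers `a, b` with `a + b` odd, the sum
`T'(n) = ∑_{k,ℓ ≥ 1 odd, ak + bℓ = n} kℓ` satisfies `T'(n) ~ n³/(12a²b²)`
as `n → ∞` along odd integers `n`. -/
theorem two_var_odd_weighted_partition_asymptotics (a b : ℕ) (ha : 0 < a) (hb : 0 < b)
    (hab : Nat.Coprime a b) (hparity : Odd (a + b)) :
    Tendsto
      (fun n : ℕ =>
        ((∑ p ∈ (Finset.Ioc 0 n ×ˢ Finset.Ioc 0 n).filter
            (fun p : ℕ × ℕ => Odd p.1 ∧ Odd p.2 ∧ a * p.1 + b * p.2 = n), p.1 * p.2 : ℕ) : ℝ)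
          * (12 * (a : ℝ) ^ 2 * (b : ℝ) ^ 2) / (n : ℝ) ^ 3)
      (atTop ⊓ Filter.principal {n : ℕ | Odd n}) (nhds 1) := by
  set C : ℝ := 1272 * (a:ℝ)^3 * (b:ℝ)^3 with hC
  set f : ℕ → ℝ := fun n : ℕ =>
        ((∑ p ∈ (Finset.Ioc 0 n ×ˢ Finset.Ioc 0 n).filter
            (fun p : ℕ × ℕ => Odd p.1 ∧ Odd p.2 ∧ a * p.1 + b * p.2 = n), p.1 * p.2 : ℕ) : ℝ)
          * (12 * (a : ℝ) ^ 2 * (b : ℝ) ^ 2) / (n : ℝ) ^ 3 with hf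
  have main : ∀ n : ℕ, Odd n → 2*a*b + a + b ≤ n → |f n - 1| ≤ C / n := by
    intro n hn hlarge
    obtain ⟨p, q, T, hpodd, hqodd, hp1, hp2, hq1, hq2, hneq, hsum⟩ :=
      key a b ha hb hab hparity n hn hlarge
    have hn1 : 1 ≤ n := by omega
    -- cast the sum to ℤ
    have hcast : ((∑ pr ∈ (Finset.Ioc 0 n ×ˢ Finset.Ioc 0 n).filter
            (fun pr : ℕ × ℕ => Odd pr.1 ∧ Odd pr.2 ∧ a * pr.1 + b * pr.2 = n), pr.1 * pr.2 : ℕ) : ℤ)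
        = ∑ t ∈ Finset.range (T+1), ((p:ℤ) + 2*b*t) * ((q:ℤ) + 2*a*((T:ℤ) - t)) := by
      rw [hsum]
      push_cast
      refine Finset.sum_congr rfl ?_
      intro t ht
      have htT : t ≤ T := by
        have := Finset.mem_range.mp ht; omega
      have : ((T - t : ℕ) : ℤ) = (T:ℤ) - t := by omega
      rw [this]
    set Sn : ℤ := ((∑ pr ∈ (Finset.Ioc 0 n ×ˢ Finset.Ioc 0 n).filter
            (fun pr : ℕ × ℕ => Odd pr.1 ∧ Odd pr.2 ∧ a * pr.1 + b * pr.2 = n), pr.1 * pr.2 : ℕ) : ℤ)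
      with hSn
    have hNint : (n:ℤ) = 2*(a:ℤ)*b*T + ((a:ℤ)*p + (b:ℤ)*q) := by
      rw [hneq]; push_cast; ring
    have h6 := int_closed (p:ℤ) (q:ℤ) (a:ℤ) (b:ℤ) T
    rw [← hcast] at h6
    have hbound : |12*(a:ℤ)^2*(b:ℤ)^2*Sn - (n:ℤ)^3| ≤ 1272*(a:ℤ)^3*(b:ℤ)^3*(n:ℤ)^2 :=
      estimate' (a:ℤ) (b:ℤ) (p:ℤ) (q:ℤ) (T:ℤ) (n:ℤ) Sn
        (by exact_mod_cast ha) (by exact_mod_cast hb)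
        (by exact_mod_cast hp1) (by exact_mod_cast hp2)
        (by exact_mod_cast hq1) (by exact_mod_cast hq2)
        (by positivity) hNint h6
    have hR : |12*(a:ℝ)^2*(b:ℝ)^2*((Sn:ℤ):ℝ) - (n:ℝ)^3| ≤ 1272*(a:ℝ)^3*(b:ℝ)^3*(n:ℝ)^2 := by
      exact_mod_cast hbound
    have hnpos : (0:ℝ) < n := by exact_mod_cast hn1
    have hn3 : (0:ℝ) < (n:ℝ)^3 := by positivity
    have e : f n - 1 = (12*(a:ℝ)^2*(b:ℝ)^2*((Sn:ℤ):ℝ) - (n:ℝ)^3)/(n:ℝ)^3 := by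
      rw [hf]
      simp only [hSn]
      push_cast
      field_simp
    rw [e, abs_div, abs_of_pos hn3, div_le_div_iff₀ hn3 hnpos]
    have hmul := mul_le_mul_of_nonneg_right hR (le_of_lt hnpos)
    have e2 : (n:ℝ)^2*(n:ℝ) = (n:ℝ)^3 := by ring
    have e3 : C * (n:ℝ)^3 = 1272*(a:ℝ)^3*(b:ℝ)^3*(n:ℝ)^2*(n:ℝ) := by rw [hC]; ring
    linarith [hmul]
  have hCpos : 0 ≤ C := by positivity
  have hg : Tendsto (fun n : ℕ => 1 - C/(n:ℝ)) (atTop ⊓ Filter.principal {n : ℕ | Odd n})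
      (nhds 1) := by
    have : Tendsto (fun n : ℕ => 1 - C/(n:ℝ)) atTop (nhds 1) := by
      have h0 : Tendsto (fun n : ℕ => C/(n:ℝ)) atTop (nhds 0) :=
        tendsto_const_div_atTop_nhds_zero_nat C
      simpa using tendsto_const_nhds.sub h0
    exact this.mono_left inf_le_left
  have hh : Tendsto (fun n : ℕ => 1 + C/(n:ℝ)) (atTop ⊓ Filter.principal {n : ℕ | Odd n})
      (nhds 1) := by
    have : Tendsto (fun n : ℕ => 1 + C/(n:ℝ)) atTop (nhds 1) := by
      have h0 : Tendsto (fun n : ℕ => C/(n:ℝ)) atTop (nhds 0) :=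
        tendsto_const_div_atTop_nhds_zero_nat C
      simpa using tendsto_const_nhds.add h0
    exact this.mono_left inf_le_left
  refine tendsto_of_tendsto_of_tendsto_of_le_of_le' hg hh ?_ ?_
  · rw [Filter.eventually_inf_principal]
    filter_upwards [Filter.eventually_ge_atTop (2*a*b + a + b)] with n hn hodd
    have := main n hodd hn
    have h := abs_le.mp this
    linarith [h.1]
  · rw [Filter.eventually_inf_principal]
    filter_upwards [Filter.eventually_ge_atTop (2*a*b + a + b)] with n hn hodd
    have := main n hodd hn
    have h := abs_le.mp this
    linarith [h.2]
end

section
/- Define S_oh(n) = ∑ kℓ, the sum over all quadruples (a,b,k,ℓ) of positive integers with a and b both odd, gcd(a,b) = 1, ak + bℓ = n and k < ℓ. Then S_oh(n)/n³ → 1/8 as n → ∞ along prime numbers n. -/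
/-!
Fix odd coprime heights `a, b`. A width `k` admits a partner `l = (n - a k) / b > k` exactly when
`(a + b) k < n` and `a k ≡ n (mod b)`, so the admissible `k` form an arithmetic progression of
step `b` and length `≈ n / (b (a + b))`. Summing the quadratic `k (n - a k) / b` along it gives
`n⁻³ ∑ kℓ → (a + 3b) / (6 b² (a + b)³)`, and the uniform bound
`n³ / (b (a + b)²) ≤ n³ / (a b)^{3/2}` lets dominated convergence interchange the limit with the
sum over `(a, b)`.

The limit density and its swap add up to `1 / (6 a² b²)`. Writing every pair of odd numbers
uniquely as `d • (a, b)` with `d` odd and `(a, b)` odd coprime gives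
`∑ 1 / (a² b²) = (∑_{m odd} m⁻²)² / ∑_{d odd} d⁻⁴ = (π²/8)² / (π⁴/96) = 3/2`,
so the total is `(1/2) · (1/6) · (3/2) = 1/8`.
-/

open Filter Finset Topology

namespace TwoCylinder

variable {a b n : ℕ}

theorem dvd_sub_mul_iff_mod_eq {r : ℕ} (hab : a.Coprime b) (hr : r < b)
    (har : a * r ≡ n [MOD b]) {k : ℕ} (hk : a * k ≤ n) : b ∣ n - a * k ↔ k % b = r := by
  rw [← Nat.modEq_iff_dvd' hk, ← Nat.mod_eq_of_lt hr]
  constructor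
  · intro h
    exact Nat.ModEq.cancel_left_of_coprime (Nat.coprime_comm.1 hab) (h.trans har.symm)
  · intro h
    exact (Nat.ModEq.mul_left a h).trans har

theorem exists_lt_mul_modEq (hab : a.Coprime b) (hb : 0 < b) (n : ℕ) :
    ∃ r < b, a * r ≡ n [MOD b] := by
  have : NeZero b := ⟨hb.ne'⟩
  refine ⟨((n : ZMod b) * (a : ZMod b)⁻¹).val, ZMod.val_lt _, ?_⟩
  rw [← ZMod.natCast_eq_natCast_iff, Nat.cast_mul, ZMod.natCast_val, ZMod.cast_id', id,
    mul_left_comm, ZMod.coe_mul_inv_eq_one a hab, mul_one]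

theorem mem_image_range_add_mul_iff {r L k : ℕ} (hr : r < b) :
    k ∈ (range ((L + b - r) / b)).image (fun t => r + t * b) ↔ k ≤ L ∧ k % b = r := by
  have hb : 0 < b := by omega
  have hlt (t : ℕ) : t < (L + b - r) / b ↔ r + t * b ≤ L := by
    rw [Nat.lt_iff_add_one_le, Nat.le_div_iff_mul_le hb, Nat.succ_mul]
    omega
  simp only [mem_image, mem_range, hlt]
  constructor
  · rintro ⟨t, ht, rfl⟩
    exact ⟨ht, by rw [Nat.add_mul_mod_self_right, Nat.mod_eq_of_lt hr]⟩
  · rintro ⟨hk, rfl⟩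
    exact ⟨k / b, by rwa [Nat.mod_add_div'], Nat.mod_add_div' k b⟩

theorem sum_range_natCast (M : ℕ) : ∑ t ∈ range M, (t : ℝ) = M * (M - 1) / 2 := by
  induction M with
  | zero => simp
  | succ m ih => rw [sum_range_succ, ih]; push_cast; ring

theorem sum_range_natCast_sq (M : ℕ) :
    ∑ t ∈ range M, (t : ℝ) ^ 2 = M * (M - 1) * (2 * M - 1) / 6 := by
  induction M with
  | zero => simp
  | succ m ih => rw [sum_range_succ, ih]; push_cast; ring

theorem tendsto_div_natCast_of_abs_mul_sub_le {u : ℕ → ℝ} {d C : ℝ} (hd : d ≠ 0)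
    (h : ∀ᶠ n in atTop, |d * u n - n| ≤ C) : Tendsto (fun n => u n / n) atTop (𝓝 d⁻¹) := by
  have herr : Tendsto (fun n : ℕ => (d * u n - n) / n) atTop (𝓝 0) := by
    refine squeeze_zero_norm' ?_ (tendsto_const_div_atTop_nhds_zero_nat C)
    filter_upwards [h] with n hn
    rw [norm_div, Real.norm_natCast]
    exact div_le_div_of_nonneg_right hn (Nat.cast_nonneg n)
  have hlim := (herr.const_mul d⁻¹).const_add d⁻¹
  rw [mul_zero, add_zero] at hlim
  refine hlim.congr' ?_
  filter_upwards [eventually_ne_atTop 0] with n hn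
  have : (n : ℝ) ≠ 0 := Nat.cast_ne_zero.2 hn
  field_simp
  ring

theorem mul_sqrt_mul_mul_sqrt_le {x y : ℝ} (hx : 0 ≤ x) (hy : 0 ≤ y) :
    x * √x * (y * √y) ≤ y * (x + y) ^ 2 := by
  have hsqrt : √x * √y ≤ x + y :=
    calc √x * √y ≤ √(x + y) * √(x + y) := by gcongr <;> linarith
      _ = x + y := Real.mul_self_sqrt (by positivity)
  calc x * √x * (y * √y) = y * (x * (√x * √y)) := by ring
    _ ≤ y * ((x + y) * (x + y)) := by gcongr; linarith
    _ = y * (x + y) ^ 2 := by ring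

theorem summable_inv_mul_sqrt : Summable fun m : ℕ => ((m : ℝ) * √m)⁻¹ := by
  refine (Real.summable_one_div_nat_rpow.2 (by norm_num : (1 : ℝ) < 3 / 2)).congr fun m => ?_
  rw [show (3 / 2 : ℝ) = 1 + 1 / 2 by norm_num, Real.rpow_add' (Nat.cast_nonneg m) (by norm_num),
    Real.rpow_one, ← Real.sqrt_eq_rpow, one_div]

theorem hasSum_ite_odd {α : Type*} [AddCommGroup α] [TopologicalSpace α]
    [IsTopologicalAddGroup α] {f : ℕ → α} {s e : α} (hf : HasSum f s)
    (he : HasSum (fun m => f (2 * m)) e) :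
    HasSum (fun n => if Odd n then f n else 0) (s - e) := by
  have heven : HasSum (fun n => if Even n then f n else 0) e := by
    rw [← (mul_right_injective₀ two_ne_zero).hasSum_iff]
    · simpa [Function.comp_def] using he
    · rintro n hn
      rw [if_neg]
      rintro ⟨m, rfl⟩
      exact hn ⟨m, two_mul m⟩
  refine (hf.sub heven).congr_fun fun n => ?_
  rcases Nat.even_or_odd n with hn | hn
  · simp [hn, Nat.not_odd_iff_even.2 hn]
  · simp [hn, Nat.not_even_iff_odd.2 hn]

theorem hasSum_comp_mul_coprime_iff {α : Type*} [AddCommMonoid α] [TopologicalSpace α]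
    {F : ℕ × ℕ → α} (hF : ∀ p, F p ≠ 0 → p.1 ≠ 0) {s : α} :
    HasSum (fun q : ℕ × {p : ℕ × ℕ | p.1.Coprime p.2} =>
      F (q.1 * q.2.1.1, q.1 * q.2.1.2)) s ↔ HasSum F s := by
  refine (hasSum_iff_hasSum_of_ne_zero_bij (fun q => (q.1.1 * q.1.2.1.1, q.1.1 * q.1.2.1.2))
    ?_ ?_ fun _ => rfl).symm
  · rintro ⟨⟨d, ⟨a, b⟩, hab⟩, hq⟩ ⟨⟨d', ⟨a', b'⟩, hab'⟩, hq'⟩ h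
    have hd : 0 < d := Nat.pos_of_ne_zero (left_ne_zero_of_mul (hF _ hq))
    simp only [Prod.mk.injEq] at h
    obtain rfl : d = d' := by
      simpa [Nat.gcd_mul_left, Nat.Coprime.gcd_eq_one hab, Nat.Coprime.gcd_eq_one hab'] using
        congrArg₂ Nat.gcd h.1 h.2
    obtain rfl := Nat.eq_of_mul_eq_mul_left hd h.1
    obtain rfl := Nat.eq_of_mul_eq_mul_left hd h.2
    rfl
  · intro p hp
    have hd : 0 < p.1.gcd p.2 := Nat.gcd_pos_of_pos_left _ (Nat.pos_of_ne_zero (hF p hp))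
    have hx := Nat.mul_div_cancel' (Nat.gcd_dvd_left p.1 p.2)
    have hy := Nat.mul_div_cancel' (Nat.gcd_dvd_right p.1 p.2)
    refine ⟨⟨⟨p.1.gcd p.2, ⟨p.1 / p.1.gcd p.2, p.2 / p.1.gcd p.2⟩,
      Nat.coprime_div_gcd_div_gcd hd⟩, ?_⟩, ?_⟩
    · simpa [Function.mem_support, hx, hy] using hp
    · simp [hx, hy]

theorem tsum_sq_mul_tsum_coprime {f : ℕ → ℝ} (hf : Summable f) (hnn : 0 ≤ f) (h0 : f 0 = 0)
    (hmul : ∀ m n, f (m * n) = f m * f n) :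
    (∑' d, f d ^ 2) * ∑' p : {p : ℕ × ℕ | p.1.Coprime p.2}, f p.1.1 * f p.1.2 =
      (∑' n, f n) ^ 2 := by
  have hpairs : Summable fun p : ℕ × ℕ => f p.1 * f p.2 := hf.mul_of_nonneg hf hnn hnn
  have hsq : Summable fun d => f d ^ 2 :=
    (hf.comp_injective (Nat.pow_left_injective two_ne_zero)).congr fun d => by simp [sq, hmul]
  have hcop := hpairs.subtype fun p => p.1.Coprime p.2
  have hfactor := hsq.hasSum.mul hcop.hasSum
    (hsq.mul_of_nonneg hcop (fun _ => sq_nonneg _) fun _ => mul_nonneg (hnn _) (hnn _))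
  have hall : HasSum (fun p : ℕ × ℕ => f p.1 * f p.2) ((∑' n, f n) ^ 2) := by
    rw [sq]
    exact hf.hasSum.mul hf.hasSum hpairs
  rw [← hasSum_comp_mul_coprime_iff fun p hp h => hp (by simp [h, h0])] at hall
  refine hfactor.unique (hall.congr_fun fun q => ?_)
  simp only [Function.comp, hmul]
  ring

noncomputable def oddInvPow (k m : ℕ) : ℝ := if Odd m then 1 / (m : ℝ) ^ k else 0

theorem hasSum_oddInvPow {k : ℕ} {S : ℝ} (h : HasSum (fun n : ℕ => 1 / (n : ℝ) ^ k) S) :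
    HasSum (oddInvPow k) ((1 - 1 / 2 ^ k) * S) := by
  have he : HasSum (fun m : ℕ => 1 / ((2 * m : ℕ) : ℝ) ^ k) (S / 2 ^ k) :=
    (h.div_const _).congr_fun fun m => by push_cast; rw [mul_pow, div_div, mul_comm]
  rw [show (1 - 1 / 2 ^ k) * S = S - S / 2 ^ k by ring]
  exact hasSum_ite_odd h he

theorem oddInvPow_nonneg (k m : ℕ) : 0 ≤ oddInvPow k m := by
  unfold oddInvPow
  split_ifs <;> positivity

theorem oddInvPow_zero (k : ℕ) : oddInvPow k 0 = 0 := by simp [oddInvPow]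

theorem oddInvPow_mul (k m n : ℕ) : oddInvPow k (m * n) = oddInvPow k m * oddInvPow k n := by
  unfold oddInvPow
  split_ifs <;> simp_all [Nat.odd_mul, mul_pow, mul_comm]

theorem oddInvPow_sq (k m : ℕ) : oddInvPow k m ^ 2 = oddInvPow (2 * k) m := by
  unfold oddInvPow
  split_ifs <;> simp [← pow_mul, mul_comm]

theorem tsum_coprime_oddInvPow_two :
    ∑' p : {p : ℕ × ℕ | p.1.Coprime p.2}, oddInvPow 2 p.1.1 * oddInvPow 2 p.1.2 = 3 / 2 := by
  have h := tsum_sq_mul_tsum_coprime (hasSum_oddInvPow hasSum_zeta_two).summable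
    (oddInvPow_nonneg 2) (oddInvPow_zero 2) (oddInvPow_mul 2)
  simp only [oddInvPow_sq, (hasSum_oddInvPow hasSum_zeta_four).tsum_eq,
    (hasSum_oddInvPow hasSum_zeta_two).tsum_eq] at h
  set T := ∑' p : {p : ℕ × ℕ | p.1.Coprime p.2}, oddInvPow 2 p.1.1 * oddInvPow 2 p.1.2
  have hπ : Real.pi ^ 4 * (T / 96) = Real.pi ^ 4 * (1 / 64) := by linear_combination h
  linarith [mul_left_cancel₀ (pow_ne_zero 4 Real.pi_ne_zero) hπ]

def twoCylSum (a b n : ℕ) : ℕ :=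
  ∑ q ∈ (Ioc 0 n ×ˢ Ioc 0 n).filter (fun q : ℕ × ℕ => a * q.1 + b * q.2 = n ∧ q.1 < q.2),
    q.1 * q.2

/-- The number of `k ≤ (n - 1) / (a + b)` with `k ≡ r (mod b)`, including `k = 0` when `r = 0`
(for `r < b`). -/
def widthCount (a b r n : ℕ) : ℕ := ((n - 1) / (a + b) + b - r) / b

noncomputable def twoCylDensity (a b : ℕ) : ℝ := (a + 3 * b) / (6 * b ^ 2 * (a + b) ^ 3)

def oddCoprimePairs : Set (ℕ × ℕ) := {p | Odd p.1 ∧ Odd p.2 ∧ p.1.Coprime p.2}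

theorem twoCylSum_eq_zero (h : n < a ∨ n < b) : twoCylSum a b n = 0 := by
  refine sum_eq_zero fun q hq => absurd hq ?_
  simp only [mem_filter, mem_product, mem_Ioc, not_and]
  rintro ⟨⟨hk, -⟩, hl, -⟩ hn -
  have : a ≤ a * q.1 := Nat.le_mul_of_pos_right a hk
  have : b ≤ b * q.2 := Nat.le_mul_of_pos_right b hl
  omega

theorem twoCylSum_eq_sum_filter (hb : 0 < b) :
    twoCylSum a b n = ∑ k ∈ (Ioc 0 n).filter (fun k => b ∣ n - a * k ∧ (a + b) * k < n),
      k * ((n - a * k) / b) := by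
  rw [twoCylSum, ← sum_image (f := fun q : ℕ × ℕ => q.1 * q.2)
    (g := fun k => (k, (n - a * k) / b)) (fun k _ k' _ h => congrArg Prod.fst h)]
  congr 1
  ext ⟨k, l⟩
  simp only [mem_filter, mem_product, mem_Ioc, mem_image, Prod.mk.injEq]
  constructor
  · rintro ⟨⟨⟨hk, hkn⟩, hl, hln⟩, hkl, hlt⟩
    have hbl : b * k < b * l := Nat.mul_lt_mul_of_pos_left hlt hb
    refine ⟨k, ⟨⟨hk, hkn⟩, ⟨l, by omega⟩, by nlinarith⟩, rfl, ?_⟩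
    rw [show n - a * k = b * l by omega, Nat.mul_div_cancel_left _ hb]
  · rintro ⟨k, ⟨⟨hk, hkn⟩, ⟨l, hl⟩, hlt⟩, rfl, rfl⟩
    rw [hl, Nat.mul_div_cancel_left _ hb]
    have hsum : a * k + b * l = n := by
      have : a * k ≤ n := by nlinarith
      omega
    have hkl : k < l := Nat.lt_of_mul_lt_mul_left (a := b) (by nlinarith)
    have hln : l ≤ b * l := Nat.le_mul_of_pos_left l hb
    exact ⟨⟨⟨hk, hkn⟩, by omega, by omega⟩, hsum, hkl⟩

theorem twoCylSum_div_cube_le (hb : 0 < b) :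
    (twoCylSum a b n : ℝ) / n ^ 3 ≤ (b * (a + b) ^ 2 : ℝ)⁻¹ := by
  rcases Nat.eq_zero_or_pos n with rfl | hn
  · rw [Nat.cast_zero, zero_pow three_ne_zero, div_zero]
    positivity
  have hab : (0 : ℝ) < a + b := by positivity
  set S := (Ioc 0 n).filter (fun k => b ∣ n - a * k ∧ (a + b) * k < n)
  have hcard : (#S : ℝ) ≤ n / (a + b) := by
    have hsub : S ⊆ Ioc 0 (n / (a + b)) := fun k hk => by
      simp only [S, mem_filter, mem_Ioc] at hk ⊢
      exact ⟨hk.1.1, (Nat.le_div_iff_mul_le (by omega)).2 (by linarith [mul_comm k (a + b)])⟩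
    have := (Nat.cast_le (α := ℝ)).2 ((card_le_card hsub).trans_eq (Nat.card_Ioc 0 _))
    exact this.trans (by simpa using Nat.cast_div_le (α := ℝ) (m := n) (n := a + b))
  have hterm : ∀ k ∈ S, ((k * ((n - a * k) / b) : ℕ) : ℝ) ≤ n / (a + b) * (n / b) := by
    intro k hk
    simp only [S, mem_filter] at hk
    rw [Nat.cast_mul]
    gcongr
    · rw [le_div_iff₀ hab]
      exact_mod_cast (by linarith [mul_comm k (a + b)] : k * (a + b) ≤ n)
    · exact Nat.cast_div_le.trans (by gcongr; exact_mod_cast Nat.sub_le n (a * k))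
  rw [twoCylSum_eq_sum_filter hb, Nat.cast_sum, div_le_iff₀ (by positivity)]
  calc ∑ k ∈ S, ((k * ((n - a * k) / b) : ℕ) : ℝ)
      ≤ #S • (n / (a + b) * (n / b)) := sum_le_card_nsmul _ _ _ hterm
    _ ≤ n / (a + b) * (n / (a + b) * (n / b)) := by rw [nsmul_eq_mul]; gcongr
    _ = (b * (a + b) ^ 2 : ℝ)⁻¹ * n ^ 3 := by field_simp

theorem twoCylSum_eq_sum_range {r : ℕ} (hab : a.Coprime b) (hr : r < b)
    (har : a * r ≡ n [MOD b]) :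
    twoCylSum a b n = ∑ t ∈ range (widthCount a b r n),
      (r + t * b) * ((n - a * (r + t * b)) / b) := by
  have hb : 0 < b := by omega
  have hmem {k : ℕ} (hk : 0 < k) :
      k ∈ (Ioc 0 n).filter (fun k => b ∣ n - a * k ∧ (a + b) * k < n) ↔
        k ∈ (range (widthCount a b r n)).image (fun t => r + t * b) := by
    rw [widthCount, mem_image_range_add_mul_iff hr, mem_filter, mem_Ioc,
      Nat.le_div_iff_mul_le (by omega), mul_comm k]
    have hkn : k ≤ (a + b) * k := Nat.le_mul_of_pos_left k (by omega)
    have hak : a * k ≤ (a + b) * k := Nat.mul_le_mul_right k (by omega)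
    constructor
    · rintro ⟨-, hdvd, hlt⟩
      exact ⟨by omega, (dvd_sub_mul_iff_mod_eq hab hr har (by omega)).1 hdvd⟩
    · rintro ⟨hle, hmod⟩
      exact ⟨⟨hk, by omega⟩, (dvd_sub_mul_iff_mod_eq hab hr har (by omega)).2 hmod, by omega⟩
  rw [twoCylSum_eq_sum_filter hb, ← sum_image (f := fun k : ℕ => k * ((n - a * k) / b))
    (g := fun t => r + t * b) fun t _ t' _ h => by simpa [hb.ne'] using h]
  refine sum_subset (f := fun k : ℕ => k * ((n - a * k) / b))
    (fun k hk => (hmem (mem_Ioc.1 (mem_filter.1 hk).1).1).1 hk) fun k hk hk' => ?_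
  -- the progression contains `k = 0` when `b ∣ n`, and that term vanishes
  obtain rfl : k = 0 := by
    by_contra h0
    exact hk' ((hmem (Nat.pos_of_ne_zero h0)).2 hk)
  exact zero_mul _

theorem twoCylSum_cast_eq {r : ℕ} (hab : a.Coprime b) (hr : r < b) (har : a * r ≡ n [MOD b]) :
    (twoCylSum a b n : ℝ) =
      widthCount a b r n * (r * (n - a * r) / b)
        + (n - 2 * a * r) * (widthCount a b r n * (widthCount a b r n - 1) / 2)
        - a * b * (widthCount a b r n * (widthCount a b r n - 1)
            * (2 * widthCount a b r n - 1) / 6) := by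
  have hb : (b : ℝ) ≠ 0 := Nat.cast_ne_zero.2 (by omega)
  have hterm : ∀ t ∈ range (widthCount a b r n),
      (((r + t * b) * ((n - a * (r + t * b)) / b) : ℕ) : ℝ) =
        r * (n - a * r) / b + (n - 2 * a * r) * t - a * b * (t : ℝ) ^ 2 := by
    intro t ht
    obtain ⟨hle, hmod⟩ := (mem_image_range_add_mul_iff hr).1 (mem_image_of_mem _ ht)
    have hak : a * (r + t * b) ≤ n := by
      have := (Nat.le_div_iff_mul_le (by omega)).1 hle
      have : a * (r + t * b) ≤ (r + t * b) * (a + b) := by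
        rw [mul_comm]
        exact Nat.mul_le_mul_left _ (Nat.le_add_right a b)
      omega
    rw [Nat.cast_mul, Nat.cast_div ((dvd_sub_mul_iff_mod_eq hab hr har hak).2 hmod) hb,
      Nat.cast_sub hak]
    push_cast
    field_simp
    ring
  rw [twoCylSum_eq_sum_range hab hr har, Nat.cast_sum, sum_congr rfl hterm, sum_sub_distrib,
    sum_add_distrib, sum_const, card_range, nsmul_eq_mul, ← mul_sum, ← mul_sum,
    sum_range_natCast, sum_range_natCast_sq]

theorem abs_mul_widthCount_sub_le {r : ℕ} (hb : 0 < b) (hr : r < b) (hn : 1 ≤ n) :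
    |(b * (a + b) : ℝ) * widthCount a b r n - n| ≤ b * (a + b) * (b + 1) := by
  have h1 := Nat.div_mul_le_self (n - 1) (a + b)
  have h2 := Nat.lt_mul_div_succ (n - 1) (show 0 < a + b by omega)
  have h3 := Nat.div_mul_le_self ((n - 1) / (a + b) + b - r) b
  have h4 := Nat.lt_mul_div_succ ((n - 1) / (a + b) + b - r) hb
  rw [widthCount]
  generalize (n - 1) / (a + b) = L at *
  generalize (L + b - r) / b = m at *
  have e1 : (L * (a + b) + 1 : ℝ) ≤ n := by exact_mod_cast (by omega : L * (a + b) + 1 ≤ n)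
  have e2 : (n : ℝ) ≤ (a + b) * (L + 1) := by exact_mod_cast (by omega : n ≤ (a + b) * (L + 1))
  have e3 : (m * b + r : ℝ) ≤ L + b := by exact_mod_cast (by omega : m * b + r ≤ L + b)
  have e4 : (L + b : ℝ) < b * (m + 1) + r := by
    exact_mod_cast (by omega : L + b < b * (m + 1) + r)
  have e5 : (r : ℝ) < b := by exact_mod_cast hr
  have e6 : (1 : ℝ) ≤ b := by exact_mod_cast hb
  have hab : (0 : ℝ) ≤ a + b := by positivity
  rw [abs_le]
  constructor <;>
    nlinarith [mul_le_mul_of_nonneg_left e3 hab, mul_le_mul_of_nonneg_left e4.le hab]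

theorem tendsto_twoCylSum_div_cube (hab : a.Coprime b) (hb : 0 < b) :
    Tendsto (fun n => (twoCylSum a b n : ℝ) / n ^ 3) atTop (𝓝 (twoCylDensity a b)) := by
  choose r hr har using exists_lt_mul_modEq hab hb
  have hM : Tendsto (fun n => (widthCount a b (r n) n : ℝ) / n) atTop (𝓝 (b * (a + b) : ℝ)⁻¹) :=
    tendsto_div_natCast_of_abs_mul_sub_le (by positivity) <| by
      filter_upwards [eventually_ge_atTop 1] with n hn
      exact abs_mul_widthCount_sub_le hb (hr n) hn
  have hr0 : Tendsto (fun n => (r n : ℝ) / n) atTop (𝓝 0) :=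
    squeeze_zero (fun n => by positivity)
      (fun n => div_le_div_of_nonneg_right (by exact_mod_cast (hr n).le) (Nat.cast_nonneg n))
      (tendsto_const_div_atTop_nhds_zero_nat (b : ℝ))
  -- `twoCylSum a b n / n³ = Φ (widthCount / n, r / n, 1 / n)` by `twoCylSum_cast_eq`
  let Φ : ℝ × ℝ × ℝ → ℝ := fun p => p.1 * (p.2.1 * (1 - a * p.2.1) / b)
    + (1 - 2 * a * p.2.1) * (p.1 * (p.1 - p.2.2) / 2)
    - a * b * (p.1 * (p.1 - p.2.2) * (2 * p.1 - p.2.2) / 6)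
  have hΦ : Continuous Φ := by fun_prop
  have hlim := (hΦ.tendsto _).comp (hM.prodMk_nhds (hr0.prodMk_nhds
    tendsto_inv_atTop_nhds_zero_nat))
  have hval : Φ ((b * (a + b) : ℝ)⁻¹, 0, 0) = twoCylDensity a b := by
    simp only [Φ, twoCylDensity]
    field_simp
    ring
  rw [hval] at hlim
  refine hlim.congr' ?_
  filter_upwards [eventually_ne_atTop 0] with n hn
  have : (n : ℝ) ≠ 0 := Nat.cast_ne_zero.2 hn
  simp only [Function.comp, Φ, twoCylSum_cast_eq hab (hr n) (har n)]
  field_simp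

theorem swap_mem_oddCoprimePairs {p : ℕ × ℕ} :
    p.swap ∈ oddCoprimePairs ↔ p ∈ oddCoprimePairs := by
  simp only [oddCoprimePairs, Set.mem_ofPred_eq, Prod.fst_swap, Prod.snd_swap, Nat.coprime_comm]
  tauto

theorem twoCylDensity_add_swap (ha : 0 < a) (hb : 0 < b) :
    twoCylDensity a b + twoCylDensity b a = 1 / 6 * (1 / (a : ℝ) ^ 2 * (1 / (b : ℝ) ^ 2)) := by
  have ha' : (a : ℝ) ≠ 0 := by positivity
  have hb' : (b : ℝ) ≠ 0 := by positivity
  have hab : (a : ℝ) + b ≠ 0 := by positivity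
  have hba : (b : ℝ) + a ≠ 0 := by positivity
  unfold twoCylDensity
  field_simp
  ring

theorem indicator_twoCylDensity_add_swap (p : ℕ × ℕ) :
    oddCoprimePairs.indicator (fun p => twoCylDensity p.1 p.2) p
      + oddCoprimePairs.indicator (fun p => twoCylDensity p.1 p.2) p.swap =
      1 / 6 * {p : ℕ × ℕ | p.1.Coprime p.2}.indicator
        (fun p => oddInvPow 2 p.1 * oddInvPow 2 p.2) p := by
  by_cases hp : p ∈ oddCoprimePairs
  · obtain ⟨ha, hb, hab⟩ := id hp
    rw [Set.indicator_of_mem hp, Set.indicator_of_mem (swap_mem_oddCoprimePairs.2 hp),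
      Set.indicator_of_mem (show p ∈ {p : ℕ × ℕ | p.1.Coprime p.2} from hab)]
    simp only [Prod.fst_swap, Prod.snd_swap, oddInvPow, if_pos ha, if_pos hb]
    exact twoCylDensity_add_swap ha.pos hb.pos
  · have hH : {p : ℕ × ℕ | p.1.Coprime p.2}.indicator
        (fun p => oddInvPow 2 p.1 * oddInvPow 2 p.2) p = 0 :=
      Set.indicator_apply_eq_zero.2 fun hab => by
        simp only [oddInvPow]
        split_ifs with ha hb
        exacts [absurd ⟨ha, hb, hab⟩ hp, mul_zero _, zero_mul _, zero_mul _]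
    rw [Set.indicator_of_notMem hp, Set.indicator_of_notMem (mt swap_mem_oddCoprimePairs.1 hp),
      hH, add_zero, mul_zero]

theorem tsum_indicator_twoCylDensity :
    ∑' p, oddCoprimePairs.indicator (fun p => twoCylDensity p.1 p.2) p = 1 / 8 := by
  set G := oddCoprimePairs.indicator fun p : ℕ × ℕ => twoCylDensity p.1 p.2
  have hG_nonneg (p : ℕ × ℕ) : 0 ≤ G p :=
    Set.indicator_nonneg (fun p _ => by unfold twoCylDensity; positivity) p
  have hH : Summable ({p : ℕ × ℕ | p.1.Coprime p.2}.indicator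
      fun p => oddInvPow 2 p.1 * oddInvPow 2 p.2) :=
    ((hasSum_oddInvPow hasSum_zeta_two).summable.mul_of_nonneg
      (hasSum_oddInvPow hasSum_zeta_two).summable (oddInvPow_nonneg 2)
      (oddInvPow_nonneg 2)).indicator _
  have hG : Summable G := (hH.mul_left (1 / 6)).of_nonneg_of_le hG_nonneg fun p => by
    linarith [indicator_twoCylDensity_add_swap p, hG_nonneg p.swap]
  have hG_swap : Summable fun p : ℕ × ℕ => G p.swap := (Equiv.prodComm ℕ ℕ).summable_iff.2 hG
  have hswap : ∑' p : ℕ × ℕ, G p.swap = ∑' p, G p := (Equiv.prodComm ℕ ℕ).tsum_eq G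
  have hsum := hG.tsum_add hG_swap
  rw [tsum_congr indicator_twoCylDensity_add_swap, tsum_mul_left, hswap,
    ← _root_.tsum_subtype, tsum_coprime_oddInvPow_two] at hsum
  linarith

theorem tendsto_indicator_twoCylSum_div_cube (p : ℕ × ℕ) :
    Tendsto (fun n => oddCoprimePairs.indicator (fun p => (twoCylSum p.1 p.2 n : ℝ) / n ^ 3) p)
      atTop (𝓝 (oddCoprimePairs.indicator (fun p => twoCylDensity p.1 p.2) p)) := by
  by_cases hp : p ∈ oddCoprimePairs
  · simp only [Set.indicator_of_mem hp]
    exact tendsto_twoCylSum_div_cube hp.2.2 hp.2.1.pos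
  · simp only [Set.indicator_of_notMem hp]
    exact tendsto_const_nhds

theorem norm_indicator_twoCylSum_div_cube_le (n : ℕ) (p : ℕ × ℕ) :
    ‖oddCoprimePairs.indicator (fun p => (twoCylSum p.1 p.2 n : ℝ) / n ^ 3) p‖ ≤
      ((p.1 : ℝ) * √p.1)⁻¹ * ((p.2 : ℝ) * √p.2)⁻¹ := by
  by_cases hp : p ∈ oddCoprimePairs
  · have ha : (0 : ℝ) < p.1 := by exact_mod_cast hp.1.pos
    have hb : (0 : ℝ) < p.2 := by exact_mod_cast hp.2.1.pos
    rw [Set.indicator_of_mem hp, Real.norm_of_nonneg (by positivity), ← mul_inv]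
    exact (twoCylSum_div_cube_le hp.2.1.pos).trans
      (inv_anti₀ (by positivity) (mul_sqrt_mul_mul_sqrt_le ha.le hb.le))
  · rw [Set.indicator_of_notMem hp, norm_zero]
    positivity

theorem sum_filter_div_cube_eq_tsum (n : ℕ) :
    ((∑ q ∈ ((Ioc 0 n ×ˢ Ioc 0 n) ×ˢ (Ioc 0 n ×ˢ Ioc 0 n)).filter
          (fun q : (ℕ × ℕ) × ℕ × ℕ =>
            Odd q.1.1 ∧ Odd q.1.2 ∧ Nat.Coprime q.1.1 q.1.2 ∧
              q.1.1 * q.2.1 + q.1.2 * q.2.2 = n ∧ q.2.1 < q.2.2),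
          q.2.1 * q.2.2 : ℕ) : ℝ) / (n : ℝ) ^ 3 =
      ∑' p, oddCoprimePairs.indicator (fun p => (twoCylSum p.1 p.2 n : ℝ) / n ^ 3) p := by
  rw [tsum_eq_sum (s := Ioc 0 n ×ˢ Ioc 0 n), sum_filter, sum_product, Nat.cast_sum, sum_div]
  · refine sum_congr rfl fun p _ => ?_
    by_cases hp : p ∈ oddCoprimePairs
    · obtain ⟨ha, hb, hab⟩ := id hp
      simp only [Set.indicator_of_mem hp, twoCylSum, sum_filter, ha, hb, iff_true_intro hab,
        true_and]
    · rw [Set.indicator_of_notMem hp,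
        sum_eq_zero fun q _ => if_neg fun h => hp ⟨h.1, h.2.1, h.2.2.1⟩, Nat.cast_zero, zero_div]
  · intro p hp
    refine Set.indicator_apply_eq_zero.2 fun hp' => ?_
    have := hp'.1.pos
    have := hp'.2.1.pos
    rw [twoCylSum_eq_zero (by simp only [mem_product, mem_Ioc] at hp; omega), Nat.cast_zero,
      zero_div]

end TwoCylinder

open TwoCylinder in
/-- `S_oh(n) = ∑ kℓ` over quadruples `(a,b,k,ℓ)` of positive integers with
`a, b` odd, `gcd(a,b) = 1`, `ak + bℓ = n` and `k < ℓ`, satisfies `S_oh(n)/n³ → 1/8`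
as `n → ∞` along primes. -/
theorem two_cylinder_odd_heights_asymptotics :
    Tendsto
      (fun n : ℕ =>
        ((∑ q ∈ ((Finset.Ioc 0 n ×ˢ Finset.Ioc 0 n) ×ˢ
              (Finset.Ioc 0 n ×ˢ Finset.Ioc 0 n)).filter
            (fun q : (ℕ × ℕ) × ℕ × ℕ =>
              Odd q.1.1 ∧ Odd q.1.2 ∧ Nat.Coprime q.1.1 q.1.2 ∧
                q.1.1 * q.2.1 + q.1.2 * q.2.2 = n ∧ q.2.1 < q.2.2),
            q.2.1 * q.2.2 : ℕ) : ℝ) / (n : ℝ) ^ 3)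
      (atTop ⊓ Filter.principal {n : ℕ | n.Prime}) (nhds (1 / 8)) := by
  have hbound : Summable fun p : ℕ × ℕ => ((p.1 : ℝ) * √p.1)⁻¹ * ((p.2 : ℝ) * √p.2)⁻¹ :=
    summable_inv_mul_sqrt.mul_of_nonneg summable_inv_mul_sqrt (fun _ => by positivity)
      fun _ => by positivity
  have hlim := tendsto_tsum_of_dominated_convergence hbound tendsto_indicator_twoCylSum_div_cube
    (Eventually.of_forall norm_indicator_twoCylSum_div_cube_le)
  rw [tsum_indicator_twoCylDensity] at hlim
  exact (hlim.mono_left inf_le_left).congr fun n => (sum_filter_div_cube_eq_tsum n).symm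
end

section
/- Define N(n) = n(n-1)(n-2)/6 + ∑ kℓ, where the sum is over all quadruples (a,b,k,ℓ) of positive integers with ak + bℓ = n and k < ℓ. Then N(n)/n³ → 3/8 as n → ∞ along prime numbers n. -/
open Filter Finset

namespace SquareTiled12

abbrev Quad := (ℕ × ℕ) × ℕ × ℕ

def P (n : ℕ) : Finset Quad :=
  ((Finset.Ioc 0 n ×ˢ Finset.Ioc 0 n) ×ˢ (Finset.Ioc 0 n ×ˢ Finset.Ioc 0 n)).filter
    (fun q => q.1.1 * q.2.1 + q.1.2 * q.2.2 = n)

lemma mem_P {n : ℕ} {q : Quad} :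
    q ∈ P n ↔ 0 < q.1.1 ∧ 0 < q.1.2 ∧ 0 < q.2.1 ∧ 0 < q.2.2 ∧
      q.1.1 * q.2.1 + q.1.2 * q.2.2 = n := by
  obtain ⟨⟨a, b⟩, k, l⟩ := q
  simp only [P, mem_filter, mem_product, mem_Ioc]
  constructor
  · rintro ⟨⟨⟨⟨ha, _⟩, hb, _⟩, ⟨hk, _⟩, hl, _⟩, he⟩
    exact ⟨ha, hb, hk, hl, he⟩
  · rintro ⟨ha, hb, hk, hl, he⟩
    have h1 : a * k ≤ n := by omega
    have h2 : b * l ≤ n := by omega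
    have hak : a ≤ a * k := Nat.le_mul_of_pos_right a hk
    have hka : k ≤ a * k := Nat.le_mul_of_pos_left k ha
    have hbl : b ≤ b * l := Nat.le_mul_of_pos_right b hl
    have hlb : l ≤ b * l := Nat.le_mul_of_pos_left l hb
    exact ⟨⟨⟨⟨ha, by omega⟩, hb, by omega⟩, ⟨hk, by omega⟩, hl, by omega⟩, he⟩

def tau (q : Quad) : Quad := ((q.1.2, q.1.1), (q.2.2, q.2.1))

lemma tau_mem {n : ℕ} {q : Quad} (h : q ∈ P n) : tau q ∈ P n := by
  rw [mem_P] at h ⊢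
  obtain ⟨ha, hb, hk, hl, he⟩ := h
  exact ⟨hb, ha, hl, hk, by dsimp [tau]; omega⟩

lemma sum_tau (n : ℕ) (F : Quad → ℤ) :
    ∑ q ∈ P n, F q = ∑ q ∈ P n, F (tau q) := by
  refine Finset.sum_bij' (fun q _ => tau q) (fun q _ => tau q)
    (fun q hq => tau_mem hq) (fun q hq => tau_mem hq) ?_ ?_ ?_
  · intro q _; rfl
  · intro q _; rfl
  · intro q _; rfl

lemma sum_tau_filter (n : ℕ) (c : Quad → Prop) [DecidablePred c] (F : Quad → ℤ) :
    ∑ q ∈ (P n).filter c, F q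
      = ∑ q ∈ (P n).filter (fun q => c (tau q)), F (tau q) := by
  rw [Finset.sum_filter, Finset.sum_filter, sum_tau n (fun q => if c q then F q else 0)]

/-- The Euclidean bijection between `{a < b}` and `{k > ℓ}`. -/
lemma sum_psi (n : ℕ) (f : ℕ → ℕ → ℤ) :
    ∑ q ∈ (P n).filter (fun q => q.1.1 < q.1.2), f (q.2.1 + q.2.2) q.2.2
      = ∑ q ∈ (P n).filter (fun q => q.2.2 < q.2.1), f q.2.1 q.2.2 := by
  refine Finset.sum_bij'
    (fun q _ => ((q.1.1, q.1.2 - q.1.1), (q.2.1 + q.2.2, q.2.2)))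
    (fun q _ => ((q.1.1, q.1.2 + q.1.1), (q.2.1 - q.2.2, q.2.2))) ?_ ?_ ?_ ?_ ?_
  · rintro ⟨⟨a, b⟩, k, l⟩ hq
    rw [mem_filter, mem_P] at hq ⊢
    obtain ⟨⟨ha, hb, hk, hl, he⟩, hab⟩ := hq
    dsimp only at *
    have e1 : a * (k + l) = a * k + a * l := by ring
    have e2 : (b - a) * l + a * l = b * l := by
      rw [← Nat.add_mul]; congr 1; omega
    refine ⟨⟨ha, by omega, by omega, hl, by omega⟩, by omega⟩
  · rintro ⟨⟨a, b⟩, k, l⟩ hq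
    rw [mem_filter, mem_P] at hq ⊢
    obtain ⟨⟨ha, hb, hk, hl, he⟩, hkl⟩ := hq
    dsimp only at *
    have e1 : (b + a) * l = b * l + a * l := by ring
    have e2 : a * (k - l) + a * l = a * k := by
      rw [← Nat.mul_add]; congr 1; omega
    refine ⟨⟨ha, by omega, by omega, hl, by omega⟩, by omega⟩
  · rintro ⟨⟨a, b⟩, k, l⟩ hq
    rw [mem_filter, mem_P] at hq
    obtain ⟨⟨ha, hb, hk, hl, he⟩, hab⟩ := hq
    dsimp only at *
    have h1 : b - a + a = b := by omega
    have h2 : k + l - l = k := by omega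
    rw [h1, h2]
  · rintro ⟨⟨a, b⟩, k, l⟩ hq
    rw [mem_filter, mem_P] at hq
    obtain ⟨⟨ha, hb, hk, hl, he⟩, hkl⟩ := hq
    dsimp only at *
    have h1 : b + a - a = b := by omega
    have h2 : k - l + l = k := by omega
    rw [h1, h2]
  · rintro ⟨⟨a, b⟩, k, l⟩ _; rfl

lemma filter_keq (p : ℕ) (hp : p.Prime) :
    (P p).filter (fun q => q.2.1 = q.2.2)
      = (Finset.Ioo 0 p).image (fun a => ((a, p - a), (1, 1))) := by
  ext ⟨⟨a, b⟩, k, l⟩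
  simp only [mem_filter, mem_P, mem_image, mem_Ioo]
  constructor
  · rintro ⟨⟨ha, hb, hk, hl, he⟩, hkl⟩
    subst hkl
    have hdvd : k ∣ p := ⟨a + b, by rw [← he]; ring⟩
    rcases (Nat.Prime.eq_one_or_self_of_dvd hp k hdvd) with h1 | h1
    · subst h1
      refine ⟨a, ⟨ha, ?_⟩, ?_⟩
      · omega
      · have : b = p - a := by omega
        subst this; rfl
    · exfalso
      subst h1
      nlinarith
  · rintro ⟨x, ⟨hx0, hxp⟩, hq⟩
    cases hq
    refine ⟨⟨hx0, by omega, one_pos, one_pos, by omega⟩, rfl⟩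

lemma filter_aeq (p : ℕ) (hp : p.Prime) :
    (P p).filter (fun q => q.1.1 = q.1.2)
      = (Finset.Ioo 0 p).image (fun k => ((1, 1), (k, p - k))) := by
  ext ⟨⟨a, b⟩, k, l⟩
  simp only [mem_filter, mem_P, mem_image, mem_Ioo]
  constructor
  · rintro ⟨⟨ha, hb, hk, hl, he⟩, hab⟩
    subst hab
    have hdvd : a ∣ p := ⟨k + l, by rw [← he]; ring⟩
    rcases (Nat.Prime.eq_one_or_self_of_dvd hp a hdvd) with h1 | h1
    · subst h1
      refine ⟨k, ⟨hk, ?_⟩, ?_⟩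
      · omega
      · have : l = p - k := by omega
        subst this; rfl
    · exfalso
      subst h1
      nlinarith
  · rintro ⟨x, ⟨hx0, hxp⟩, hq⟩
    cases hq
    refine ⟨⟨one_pos, one_pos, hx0, by omega, by omega⟩, rfl⟩

lemma sum_keq (p : ℕ) (hp : p.Prime) (f : ℕ → ℕ → ℤ) :
    ∑ q ∈ (P p).filter (fun q => q.2.1 = q.2.2), f q.2.1 q.2.2
      = (p - 1 : ℕ) * f 1 1 := by
  have hinj : ∀ x ∈ Finset.Ioo 0 p, ∀ y ∈ Finset.Ioo 0 p,
      (fun a => ((a, p - a), (1, 1))) x = (fun a => ((a, p - a), (1, 1))) y → x = y := by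
    intro x _ y _ h
    simpa using congrArg (fun q : Quad => q.1.1) h
  rw [filter_keq p hp, Finset.sum_image hinj]
  rw [show (∑ x ∈ Finset.Ioo 0 p, f ((x, p - x), (1, 1)).2.1 ((x, p - x), (1, 1)).2.2)
      = ∑ _x ∈ Finset.Ioo 0 p, f 1 1 from rfl]
  rw [Finset.sum_const, Nat.card_Ioo, nsmul_eq_mul]
  norm_num

lemma sum_aeq (p : ℕ) (hp : p.Prime) (f : ℕ → ℕ → ℤ) :
    ∑ q ∈ (P p).filter (fun q => q.1.1 = q.1.2), f q.2.1 q.2.2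
      = ∑ k ∈ Finset.Ioo 0 p, f k (p - k) := by
  have hinj : ∀ x ∈ Finset.Ioo 0 p, ∀ y ∈ Finset.Ioo 0 p,
      (fun k => ((1, 1), (k, p - k))) x = (fun k => ((1, 1), (k, p - k))) y → x = y := by
    intro x _ y _ h
    simpa using congrArg (fun q : Quad => q.2.1) h
  rw [filter_aeq p hp, Finset.sum_image hinj]

lemma sum_id_formula (m : ℕ) : 2 * ∑ k ∈ Finset.range m, (k : ℤ) = m * (m - 1) := by
  induction m with
  | zero => simp
  | succ n ih => rw [Finset.sum_range_succ, mul_add, ih]; push_cast; ring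

lemma sum_sq_formula (m : ℕ) :
    6 * ∑ k ∈ Finset.range m, (k : ℤ) ^ 2 = m * (m - 1) * (2 * m - 1) := by
  induction m with
  | zero => simp
  | succ n ih => rw [Finset.sum_range_succ, mul_add, ih]; push_cast; ring

lemma Ioo_to_range (f : ℕ → ℤ) (hf : f 0 = 0) (p : ℕ) :
    ∑ k ∈ Finset.Ioo 0 p, f k = ∑ k ∈ Finset.range p, f k := by
  apply Finset.sum_subset
  · intro x hx; simp only [Finset.mem_Ioo, Finset.mem_range] at hx ⊢; omega
  · intro x hx hnx
    simp only [Finset.mem_Ioo, Finset.mem_range] at hx hnx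
    have : x = 0 := by omega
    subst this; exact hf

lemma hCp (p : ℕ) :
    6 * ∑ k ∈ Finset.Ioo 0 p, (k : ℤ) * ((p - k : ℕ) : ℤ) = p ^ 3 - p := by
  have hc : ∀ k ∈ Finset.Ioo 0 p, (k : ℤ) * ((p - k : ℕ) : ℤ)
      = (p : ℤ) * k - (k : ℤ) ^ 2 := by
    intro k hk
    simp only [Finset.mem_Ioo] at hk
    rw [Nat.cast_sub (le_of_lt hk.2)]; ring
  rw [Finset.sum_congr rfl hc,
    Ioo_to_range (fun k => (p : ℤ) * k - (k : ℤ) ^ 2) (by simp) p,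
    Finset.sum_sub_distrib, ← Finset.mul_sum]
  linear_combination 3 * (p : ℤ) * sum_id_formula p - sum_sq_formula p

lemma hQp (p : ℕ) :
    6 * ∑ k ∈ Finset.Ioo 0 p, (k : ℤ) ^ 2 = 2 * p ^ 3 - 3 * p ^ 2 + p := by
  rw [Ioo_to_range (fun k => (k : ℤ) ^ 2) (by simp) p]
  linear_combination sum_sq_formula p

lemma sum_split (s : Finset Quad) (g h : Quad → ℕ) (F : Quad → ℤ) :
    ∑ q ∈ s, F q
      = ∑ q ∈ s.filter (fun q => g q < h q), F q
        + ∑ q ∈ s.filter (fun q => g q = h q), F q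
        + ∑ q ∈ s.filter (fun q => h q < g q), F q := by
  rw [← Finset.sum_filter_add_sum_filter_not s (fun q => g q < h q) F, add_assoc]
  congr 1
  rw [← Finset.sum_filter_add_sum_filter_not (s.filter (fun q => ¬ g q < h q))
    (fun q => g q = h q) F, Finset.filter_filter, Finset.filter_filter]
  congr 1
  · apply Finset.sum_congr _ (fun _ _ => rfl)
    apply Finset.filter_congr
    intro q _
    constructor
    · rintro ⟨_, h2⟩; exact h2
    · intro h2; exact ⟨by omega, h2⟩
  · apply Finset.sum_congr _ (fun _ _ => rfl)
    apply Finset.filter_congr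
    intro q _
    constructor
    · rintro ⟨h1, h2⟩; omega
    · intro h1; exact ⟨by omega, by omega⟩

theorem key (p : ℕ) (hp : p.Prime) :
    24 * ∑ q ∈ (P p).filter (fun q => q.2.1 < q.2.2), (q.2.1 : ℤ) * q.2.2
      = 5 * (p : ℤ) ^ 3 - 6 * p ^ 2 - 17 * p + 18 := by
  -- abbreviations (as plain sums, used as atoms)
  -- X = ∑_{k>l} k*l, Pd = ∑_{k>l} k², Qd = ∑_{k>l} l²
  -- target sum Slt = ∑_{k<l} k*l
  -- τ-symmetry consequences
  have h1 : ∑ q ∈ (P p).filter (fun q => q.2.1 < q.2.2), (q.2.1 : ℤ) * q.2.2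
      = ∑ q ∈ (P p).filter (fun q => q.2.2 < q.2.1), (q.2.1 : ℤ) * q.2.2 := by
    rw [sum_tau_filter p (fun q => q.2.1 < q.2.2) (fun q => (q.2.1 : ℤ) * q.2.2)]
    exact Finset.sum_congr rfl (fun q _ => mul_comm _ _)
  have h2 : ∑ q ∈ (P p).filter (fun q => q.2.1 < q.2.2), (q.2.1 : ℤ) ^ 2
      = ∑ q ∈ (P p).filter (fun q => q.2.2 < q.2.1), (q.2.2 : ℤ) ^ 2 := by
    rw [sum_tau_filter p (fun q => q.2.1 < q.2.2) (fun q => (q.2.1 : ℤ) ^ 2)]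
    exact Finset.sum_congr rfl (fun q _ => rfl)
  have h3 : ∑ q ∈ (P p).filter (fun q => q.1.2 < q.1.1), (q.2.1 : ℤ) * q.2.2
      = ∑ q ∈ (P p).filter (fun q => q.1.1 < q.1.2), (q.2.1 : ℤ) * q.2.2 := by
    rw [sum_tau_filter p (fun q => q.1.2 < q.1.1) (fun q => (q.2.1 : ℤ) * q.2.2)]
    exact Finset.sum_congr rfl (fun q _ => mul_comm _ _)
  have h4 : ∑ q ∈ (P p).filter (fun q => q.1.2 < q.1.1), (q.2.1 : ℤ) ^ 2
      = ∑ q ∈ (P p).filter (fun q => q.1.1 < q.1.2), (q.2.2 : ℤ) ^ 2 := by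
    rw [sum_tau_filter p (fun q => q.1.2 < q.1.1) (fun q => (q.2.1 : ℤ) ^ 2)]
    exact Finset.sum_congr rfl (fun q _ => rfl)
  -- ψ-bijection consequences
  have h5 : ∑ q ∈ (P p).filter (fun q => q.1.1 < q.1.2), (q.2.1 : ℤ) * q.2.2
      = ∑ q ∈ (P p).filter (fun q => q.2.2 < q.2.1), (q.2.1 : ℤ) * q.2.2
        - ∑ q ∈ (P p).filter (fun q => q.2.2 < q.2.1), (q.2.2 : ℤ) ^ 2 := by
    have hstep : ∑ q ∈ (P p).filter (fun q => q.1.1 < q.1.2),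
        (((q.2.1 + q.2.2 : ℕ) : ℤ) * q.2.2 - ((q.2.2 : ℕ) : ℤ) ^ 2)
        = ∑ q ∈ (P p).filter (fun q => q.2.2 < q.2.1),
          ((q.2.1 : ℤ) * q.2.2 - (q.2.2 : ℤ) ^ 2) :=
      sum_psi p (fun k l => (k : ℤ) * l - (l : ℤ) ^ 2)
    simp only [Finset.sum_sub_distrib] at hstep
    rw [← hstep, ← Finset.sum_sub_distrib]
    exact Finset.sum_congr rfl (fun q _ => by push_cast; ring)
  have h6 : ∑ q ∈ (P p).filter (fun q => q.1.1 < q.1.2), (q.2.2 : ℤ) ^ 2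
      = ∑ q ∈ (P p).filter (fun q => q.2.2 < q.2.1), (q.2.2 : ℤ) ^ 2 := by
    have hstep : ∑ q ∈ (P p).filter (fun q => q.1.1 < q.1.2), ((q.2.2 : ℕ) : ℤ) ^ 2
        = ∑ q ∈ (P p).filter (fun q => q.2.2 < q.2.1), (q.2.2 : ℤ) ^ 2 :=
      sum_psi p (fun k l => (l : ℤ) ^ 2)
    exact hstep
  have h7 : ∑ q ∈ (P p).filter (fun q => q.1.1 < q.1.2), (q.2.1 : ℤ) ^ 2
      = ∑ q ∈ (P p).filter (fun q => q.2.2 < q.2.1), (q.2.1 : ℤ) ^ 2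
        - 2 * ∑ q ∈ (P p).filter (fun q => q.2.2 < q.2.1), (q.2.1 : ℤ) * q.2.2
        + ∑ q ∈ (P p).filter (fun q => q.2.2 < q.2.1), (q.2.2 : ℤ) ^ 2 := by
    have hstep : ∑ q ∈ (P p).filter (fun q => q.1.1 < q.1.2),
        (((q.2.1 + q.2.2 : ℕ) : ℤ) ^ 2 - 2 * ((q.2.1 + q.2.2 : ℕ) : ℤ) * q.2.2
          + ((q.2.2 : ℕ) : ℤ) ^ 2)
        = ∑ q ∈ (P p).filter (fun q => q.2.2 < q.2.1),
          ((q.2.1 : ℤ) ^ 2 - 2 * (q.2.1 : ℤ) * q.2.2 + (q.2.2 : ℤ) ^ 2) :=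
      sum_psi p (fun k l => (k : ℤ) ^ 2 - 2 * (k : ℤ) * l + (l : ℤ) ^ 2)
    have e1 : ∑ q ∈ (P p).filter (fun q => q.1.1 < q.1.2), (q.2.1 : ℤ) ^ 2
        = ∑ q ∈ (P p).filter (fun q => q.1.1 < q.1.2),
          (((q.2.1 + q.2.2 : ℕ) : ℤ) ^ 2 - 2 * ((q.2.1 + q.2.2 : ℕ) : ℤ) * q.2.2
            + ((q.2.2 : ℕ) : ℤ) ^ 2) :=
      Finset.sum_congr rfl (fun q _ => by push_cast; ring)
    rw [e1, hstep]
    simp only [Finset.sum_add_distrib, Finset.sum_sub_distrib]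
    have e2 : ∑ q ∈ (P p).filter (fun q => q.2.2 < q.2.1), 2 * (q.2.1 : ℤ) * q.2.2
        = 2 * ∑ q ∈ (P p).filter (fun q => q.2.2 < q.2.1), (q.2.1 : ℤ) * q.2.2 := by
      rw [Finset.mul_sum]
      exact Finset.sum_congr rfl (fun q _ => by ring)
    rw [e2]
  -- splits
  have hFsplit := sum_split (P p) (fun q => q.2.1) (fun q => q.2.2)
    (fun q => (q.2.1 : ℤ) * q.2.2)
  have hFsplit2 := sum_split (P p) (fun q => q.1.1) (fun q => q.1.2)
    (fun q => (q.2.1 : ℤ) * q.2.2)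
  have hEsplit := sum_split (P p) (fun q => q.2.1) (fun q => q.2.2)
    (fun q => (q.2.1 : ℤ) ^ 2)
  have hEsplit2 := sum_split (P p) (fun q => q.1.1) (fun q => q.1.2)
    (fun q => (q.2.1 : ℤ) ^ 2)
  -- diagonal sums
  have hDkl : ∑ q ∈ (P p).filter (fun q => q.2.1 = q.2.2), (q.2.1 : ℤ) * q.2.2
      = ((p - 1 : ℕ) : ℤ) * ((1 : ℤ) * (1 : ℕ)) :=
    sum_keq p hp (fun k l => (k : ℤ) * l)
  have hDk2 : ∑ q ∈ (P p).filter (fun q => q.2.1 = q.2.2), (q.2.1 : ℤ) ^ 2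
      = ((p - 1 : ℕ) : ℤ) * ((1 : ℤ) ^ 2) :=
    sum_keq p hp (fun k l => (k : ℤ) ^ 2)
  have hAkl : ∑ q ∈ (P p).filter (fun q => q.1.1 = q.1.2), (q.2.1 : ℤ) * q.2.2
      = ∑ k ∈ Finset.Ioo 0 p, (k : ℤ) * ((p - k : ℕ) : ℤ) :=
    sum_aeq p hp (fun k l => (k : ℤ) * l)
  have hAk2 : ∑ q ∈ (P p).filter (fun q => q.1.1 = q.1.2), (q.2.1 : ℤ) ^ 2
      = ∑ k ∈ Finset.Ioo 0 p, (k : ℤ) ^ 2 :=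
    sum_aeq p hp (fun k l => (k : ℤ) ^ 2)
  have hCval := hCp p
  have hQval := hQp p
  have hcast : ((p - 1 : ℕ) : ℤ) = (p : ℤ) - 1 := by
    have := hp.one_le
    push_cast [Nat.cast_sub this]
    ring
  rw [hcast] at hDkl hDk2
  norm_num at hDkl hDk2
  linarith [hFsplit, hFsplit2, hEsplit, hEsplit2, h1, h2, h3, h4, h5, h6, h7,
    hDkl, hDk2, hAkl, hAk2, hCval, hQval]

lemma six_dvd (n : ℕ) : 6 ∣ n * (n - 1) * (n - 2) := by
  have h := Nat.factorial_dvd_descFactorial n 3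
  have h2 : n.descFactorial 3 = (n - 2) * ((n - 1) * (n * 1)) := rfl
  have h3 : Nat.factorial 3 = 6 := rfl
  rw [h2, h3] at h
  have h4 : n * (n - 1) * (n - 2) = (n - 2) * ((n - 1) * (n * 1)) := by ring
  rw [h4]
  exact h

lemma key_nat (n : ℕ) (hp : n.Prime) :
    (24 : ℤ) * ((n * (n - 1) * (n - 2) / 6 +
        ∑ q ∈ ((Finset.Ioc 0 n ×ˢ Finset.Ioc 0 n) ×ˢ
            (Finset.Ioc 0 n ×ˢ Finset.Ioc 0 n)).filter
          (fun q : (ℕ × ℕ) × ℕ × ℕ =>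
            q.1.1 * q.2.1 + q.1.2 * q.2.2 = n ∧ q.2.1 < q.2.2),
          q.2.1 * q.2.2 : ℕ) : ℤ)
      = 9 * (n : ℤ) ^ 3 - 18 * n ^ 2 - 9 * n + 18 := by
  have hn2 : 2 ≤ n := hp.two_le
  obtain ⟨c, hc⟩ := six_dvd n
  have hA : n * (n - 1) * (n - 2) / 6 = c := by
    rw [hc]; exact Nat.mul_div_cancel_left c (by norm_num)
  have h6c : 6 * (c : ℤ) = (n : ℤ) * ((n : ℤ) - 1) * ((n : ℤ) - 2) := by
    have := congrArg (fun m : ℕ => (m : ℤ)) hc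
    push_cast [Nat.cast_sub (by omega : 1 ≤ n), Nat.cast_sub hn2] at this
    linarith
  have hfilter : ((Finset.Ioc 0 n ×ˢ Finset.Ioc 0 n) ×ˢ
      (Finset.Ioc 0 n ×ˢ Finset.Ioc 0 n)).filter
        (fun q : (ℕ × ℕ) × ℕ × ℕ =>
          q.1.1 * q.2.1 + q.1.2 * q.2.2 = n ∧ q.2.1 < q.2.2)
      = (P n).filter (fun q => q.2.1 < q.2.2) := by
    rw [P, Finset.filter_filter]
  have hS : ((∑ q ∈ ((Finset.Ioc 0 n ×ˢ Finset.Ioc 0 n) ×ˢ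
      (Finset.Ioc 0 n ×ˢ Finset.Ioc 0 n)).filter
        (fun q : (ℕ × ℕ) × ℕ × ℕ =>
          q.1.1 * q.2.1 + q.1.2 * q.2.2 = n ∧ q.2.1 < q.2.2),
        q.2.1 * q.2.2 : ℕ) : ℤ)
      = ∑ q ∈ (P n).filter (fun q => q.2.1 < q.2.2), (q.2.1 : ℤ) * q.2.2 := by
    rw [hfilter]
    push_cast
    rfl
  have hkey := key n hp
  push_cast [hA, hS]
  linarith

end SquareTiled12

open SquareTiled12 in
/-- `N(n) = n(n-1)(n-2)/6 + ∑_{ak+bℓ=n, k<ℓ} kℓ` satisfies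
`N(n)/n³ → 3/8` as `n → ∞` along primes. -/
theorem total_square_tiled_count_asymptotics :
    Tendsto
      (fun n : ℕ =>
        ((n * (n - 1) * (n - 2) / 6 +
            ∑ q ∈ ((Finset.Ioc 0 n ×ˢ Finset.Ioc 0 n) ×ˢ
                (Finset.Ioc 0 n ×ˢ Finset.Ioc 0 n)).filter
              (fun q : (ℕ × ℕ) × ℕ × ℕ =>
                q.1.1 * q.2.1 + q.1.2 * q.2.2 = n ∧ q.2.1 < q.2.2),
              q.2.1 * q.2.2 : ℕ) : ℝ) / (n : ℝ) ^ 3)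
      (atTop ⊓ Filter.principal {n : ℕ | n.Prime}) (nhds (3 / 8)) := by
  have t1 : Tendsto (fun n : ℕ => (1 : ℝ) / n) atTop (nhds 0) :=
    tendsto_one_div_atTop_nhds_zero_nat
  have hg : Tendsto
      (fun n : ℕ => ((9 : ℝ) - 18 * ((1 : ℝ) / n) - 9 * ((1 : ℝ) / n) ^ 2
        + 18 * ((1 : ℝ) / n) ^ 3) / 24) atTop
      (nhds (((9 : ℝ) - 18 * 0 - 9 * 0 ^ 2 + 18 * 0 ^ 3) / 24)) := by
    exact (((tendsto_const_nhds.sub (t1.const_mul 18)).sub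
      ((t1.pow 2).const_mul 9)).add ((t1.pow 3).const_mul 18)).div_const 24
  have hval : ((9 : ℝ) - 18 * 0 - 9 * 0 ^ 2 + 18 * 0 ^ 3) / 24 = 3 / 8 := by norm_num
  rw [hval] at hg
  refine Tendsto.congr' ?_ (hg.mono_left inf_le_left)
  rw [Filter.EventuallyEq, Filter.eventually_inf_principal]
  filter_upwards [eventually_ge_atTop 1] with n hn hprime
  have hp : n.Prime := hprime
  have hkey := key_nat n hp
  have hnR : (n : ℝ) ≠ 0 := Nat.cast_ne_zero.mpr (by omega)
  have hreal : (24 : ℝ) * ((n * (n - 1) * (n - 2) / 6 +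
      ∑ q ∈ ((Finset.Ioc 0 n ×ˢ Finset.Ioc 0 n) ×ˢ
          (Finset.Ioc 0 n ×ˢ Finset.Ioc 0 n)).filter
        (fun q : (ℕ × ℕ) × ℕ × ℕ =>
          q.1.1 * q.2.1 + q.1.2 * q.2.2 = n ∧ q.2.1 < q.2.2),
        q.2.1 * q.2.2 : ℕ) : ℝ)
      = 9 * (n : ℝ) ^ 3 - 18 * n ^ 2 - 9 * n + 18 := by
    obtain ⟨A, hAdef⟩ : ∃ A : ℕ, A = n * (n - 1) * (n - 2) / 6 +
        ∑ q ∈ ((Finset.Ioc 0 n ×ˢ Finset.Ioc 0 n) ×ˢ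
            (Finset.Ioc 0 n ×ˢ Finset.Ioc 0 n)).filter
          (fun q : (ℕ × ℕ) × ℕ × ℕ =>
            q.1.1 * q.2.1 + q.1.2 * q.2.2 = n ∧ q.2.1 < q.2.2),
          q.2.1 * q.2.2 := ⟨_, rfl⟩
    rw [← hAdef] at hkey ⊢
    exact_mod_cast congrArg (fun z : ℤ => (z : ℝ)) hkey
  have expand : ((9 : ℝ) - 18 * ((1 : ℝ) / n) - 9 * ((1 : ℝ) / n) ^ 2
      + 18 * ((1 : ℝ) / n) ^ 3) * (n : ℝ) ^ 3
      = 9 * (n : ℝ) ^ 3 - 18 * n ^ 2 - 9 * n + 18 := by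
    field_simp
  rw [div_eq_div_iff (by norm_num : (24 : ℝ) ≠ 0) (pow_ne_zero 3 hnR), expand]
  linarith [hreal]
end

section
/- For every ε > 0, the function n ↦ ∑ gcd(a,k)·gcd(b,ℓ), where the sum is over all quadruples (a,b,k,ℓ) of positive integers with ak + bℓ = n, is O(n^{3/2+ε}) as n → ∞. -/
/-!
Write `g₁ = gcd(a, k)` and `g₂ = gcd(b, ℓ)`. The involution `(a, b, k, ℓ) ↦ (b, a, ℓ, k)` swaps
`g₁` and `g₂`, so `2 g₁ g₂ ≤ g₁² + g₂²` reduces the sum to `∑ g₁²`. Group the tuples by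
`m = ak ∈ (0, n)`: such a tuple is determined by `(a, b)`, so there are at most `d(m) d(n - m)` of
them, and `g₁` is some `g ≤ √n` with `g² ∣ m`. Each such `g` has `g²` dividing at most `n / g²`
of the `m`, so `∑ g₁² ≤ max d(m) d(n - m) · n √n`. Finally `d(m) = O(m^δ)` for every `δ > 0`:
`d(m) = ∏ (e_p + 1)` and `e + 1 ≤ c_p (p^δ)^e` with `c_p = max 1 (p^δ - 1)⁻¹` (Bernoulli), where
`c_p = 1` as soon as `p^δ ≥ 2`.
-/

open Filter Asymptotics Finset

lemma add_one_le_max_mul_pow {r : ℝ} (hr : 1 < r) (e : ℕ) :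
    (e + 1 : ℝ) ≤ max 1 (r - 1)⁻¹ * r ^ e := by
  have hr1 : 0 < r - 1 := sub_pos.2 hr
  have hK : 1 ≤ max 1 (r - 1)⁻¹ * (r - 1) :=
    calc 1 = (r - 1)⁻¹ * (r - 1) := (inv_mul_cancel₀ hr1.ne').symm
      _ ≤ max 1 (r - 1)⁻¹ * (r - 1) := by gcongr; exact le_max_right _ _
  calc (e + 1 : ℝ) ≤ max 1 (r - 1)⁻¹ * (1 + e * (r - 1)) := by
        nlinarith [le_max_left 1 (r - 1)⁻¹, (Nat.cast_nonneg e : (0 : ℝ) ≤ e)]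
    _ ≤ max 1 (r - 1)⁻¹ * r ^ e := by
        gcongr
        simpa using one_add_mul_le_pow (a := r - 1) (by linarith) e

lemma Nat.card_divisors_le_prod_mul_rpow {δ : ℝ} (hδ : 0 < δ) {m : ℕ} (hm : m ≠ 0) :
    (#m.divisors : ℝ) ≤ (∏ p ∈ m.primeFactors, max 1 ((p : ℝ) ^ δ - 1)⁻¹) * (m : ℝ) ^ δ := by
  have hm_rpow : (m : ℝ) ^ δ = ∏ p ∈ m.primeFactors, ((p : ℝ) ^ δ) ^ m.factorization p := by
    conv_lhs => rw [← Nat.prod_factorization_pow_eq_self hm]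
    rw [Finsupp.prod, Nat.support_factorization, Nat.cast_prod,
      ← Real.finsetProd_rpow _ _ fun p _ => by positivity]
    refine prod_congr rfl fun p _ => ?_
    rw [Nat.cast_pow, ← Real.rpow_natCast, ← Real.rpow_natCast, ← Real.rpow_mul (by positivity),
      ← Real.rpow_mul (by positivity), mul_comm]
  rw [Nat.card_divisors hm, hm_rpow, ← prod_mul_distrib]
  push_cast
  gcongr with p hp
  exact add_one_le_max_mul_pow
    (Real.one_lt_rpow (by exact_mod_cast (Nat.prime_of_mem_primeFactors hp).one_lt) hδ) _

lemma max_one_inv_rpow_sub_one_eq_one {δ : ℝ} (hδ : 0 < δ) {p : ℕ}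
    (hp : ⌈(2 : ℝ) ^ δ⁻¹⌉₊ ≤ p) : max 1 ((p : ℝ) ^ δ - 1)⁻¹ = 1 := by
  have h2 : (2 : ℝ) ≤ (p : ℝ) ^ δ :=
    calc (2 : ℝ) = ((2 : ℝ) ^ δ⁻¹) ^ δ := by
          rw [← Real.rpow_mul (by norm_num), inv_mul_cancel₀ hδ.ne', Real.rpow_one]
      _ ≤ (p : ℝ) ^ δ := by
          gcongr
          exact (Nat.le_ceil _).trans (by exact_mod_cast hp)
  exact max_eq_left (inv_le_one_of_one_le₀ (by linarith))

lemma prod_le_prod_range_of_one_le_of_eq_one {R : Type*} [CommMonoidWithZero R] [Preorder R]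
    [ZeroLEOneClass R] [PosMulMono R] {f : ℕ → R} {N : ℕ} (h_one_le : ∀ p, 1 ≤ f p)
    (h_eq_one : ∀ p, N ≤ p → f p = 1) (s : Finset ℕ) :
    ∏ p ∈ s, f p ≤ ∏ p ∈ range N, f p :=
  calc ∏ p ∈ s, f p ≤ ∏ p ∈ s ∪ range N, f p :=
        prod_le_prod_of_subset_of_one_le subset_union_left
          (fun p _ => zero_le_one.trans (h_one_le p)) fun p _ _ => h_one_le p
    _ = ∏ p ∈ range N, f p :=
        (prod_subset subset_union_right fun p _ hp => h_eq_one p (by simpa using hp)).symm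

theorem Nat.exists_card_divisors_le_mul_rpow {δ : ℝ} (hδ : 0 < δ) :
    ∃ C : ℝ, ∀ m : ℕ, (#m.divisors : ℝ) ≤ C * (m : ℝ) ^ δ := by
  refine ⟨∏ p ∈ range ⌈(2 : ℝ) ^ δ⁻¹⌉₊, max 1 ((p : ℝ) ^ δ - 1)⁻¹, fun m => ?_⟩
  rcases eq_or_ne m 0 with rfl | hm
  · simp [Real.zero_rpow hδ.ne']
  calc (#m.divisors : ℝ) ≤ _ := Nat.card_divisors_le_prod_mul_rpow hδ hm
    _ ≤ _ := by
        gcongr ?_ * _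
        exact prod_le_prod_range_of_one_le_of_eq_one (fun _ => le_max_left _ _)
          (fun p hp => max_one_inv_rpow_sub_one_eq_one hδ hp) _

/-- `((a, b), (k, ℓ))`: heights `a, b` and widths `k, ℓ` of the two cylinders. -/
def twoCylinderData (n : ℕ) : Finset ((ℕ × ℕ) × ℕ × ℕ) :=
  ((Ioc 0 n ×ˢ Ioc 0 n) ×ˢ (Ioc 0 n ×ˢ Ioc 0 n)).filter
    fun q => q.1.1 * q.2.1 + q.1.2 * q.2.2 = n

lemma mem_twoCylinderData {n a b k l : ℕ} :
    ((a, b), (k, l)) ∈ twoCylinderData n ↔ 0 < a ∧ 0 < b ∧ 0 < k ∧ 0 < l ∧ a * k + b * l = n := by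
  simp only [twoCylinderData, mem_filter, mem_product, mem_Ioc]
  constructor
  · intro h
    exact ⟨h.1.1.1.1, h.1.1.2.1, h.1.2.1.1, h.1.2.2.1, h.2⟩
  · rintro ⟨ha, hb, hk, hl, h⟩
    refine ⟨⟨⟨⟨ha, ?_⟩, hb, ?_⟩, ⟨hk, ?_⟩, hl, ?_⟩, h⟩ <;> nlinarith

lemma sum_twoCylinderData_swap {M : Type*} [AddCommMonoid M] (n : ℕ) (f : (ℕ × ℕ) × ℕ × ℕ → M) :
    ∑ q ∈ twoCylinderData n, f (q.1.swap, q.2.swap) = ∑ q ∈ twoCylinderData n, f q := by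
  refine sum_equiv ((Equiv.prodComm ℕ ℕ).prodCongr (Equiv.prodComm ℕ ℕ)) ?_ fun _ _ => rfl
  rintro ⟨⟨a, b⟩, k, l⟩
  simp only [Equiv.prodCongr_apply, Equiv.coe_prodComm, Prod.map_apply, Prod.swap_prod_mk,
    mem_twoCylinderData]
  omega

lemma sum_twoCylinderData_gcd_mul_gcd_le_sum_gcd_sq (n : ℕ) :
    ∑ q ∈ twoCylinderData n, q.1.1.gcd q.2.1 * q.1.2.gcd q.2.2 ≤
      ∑ q ∈ twoCylinderData n, q.1.1.gcd q.2.1 ^ 2 := by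
  have h_swap := sum_twoCylinderData_swap n fun q => q.1.1.gcd q.2.1 ^ 2
  have : 2 * ∑ q ∈ twoCylinderData n, q.1.1.gcd q.2.1 * q.1.2.gcd q.2.2 ≤
      2 * ∑ q ∈ twoCylinderData n, q.1.1.gcd q.2.1 ^ 2 :=
    calc _ = ∑ q ∈ twoCylinderData n, 2 * q.1.1.gcd q.2.1 * q.1.2.gcd q.2.2 := by
          simp only [mul_sum, mul_assoc]
      _ ≤ ∑ q ∈ twoCylinderData n, (q.1.1.gcd q.2.1 ^ 2 + q.1.2.gcd q.2.2 ^ 2) :=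
          sum_le_sum fun _ _ => two_mul_le_add_sq _ _
      _ = _ := by
          rw [sum_add_distrib, ← h_swap, two_mul]
          rfl
  omega

lemma card_twoCylinderData_filter_mul_eq_le (n m : ℕ) :
    #{q ∈ twoCylinderData n | q.1.1 * q.2.1 = m} ≤ #m.divisors * #(n - m).divisors := by
  rw [← card_product]
  refine card_le_card_of_injOn Prod.fst ?_ ?_
  · rintro ⟨⟨a, b⟩, k, l⟩ hq
    simp only [coe_filter, mem_twoCylinderData, Set.mem_ofPred_eq] at hq
    obtain ⟨⟨ha, hb, hk, hl, rfl⟩, rfl⟩ := hq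
    simp only [coe_product, Set.mem_prod, mem_coe, Nat.mem_divisors, Nat.add_sub_cancel_left]
    exact ⟨⟨dvd_mul_right a k, (Nat.mul_pos ha hk).ne'⟩, dvd_mul_right b l, (Nat.mul_pos hb hl).ne'⟩
  · rintro ⟨⟨a, b⟩, k, l⟩ hq ⟨⟨a', b'⟩, k', l'⟩ hq' h
    simp only [coe_filter, mem_twoCylinderData, Set.mem_ofPred_eq] at hq hq'
    obtain ⟨rfl, rfl⟩ := Prod.mk.inj h
    have hk : k = k' := Nat.eq_of_mul_eq_mul_left hq.1.1 (hq.2.trans hq'.2.symm)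
    have hl : l = l' := Nat.eq_of_mul_eq_mul_left hq.1.2.1 (by omega)
    rw [hk, hl]

def sqDivisorSum (n m : ℕ) : ℕ := ∑ g ∈ Icc 1 n.sqrt with g ^ 2 ∣ m, g ^ 2

lemma gcd_sq_le_sqDivisorSum {n a k : ℕ} (ha : 0 < a) (hk : 0 < k) (hn : a * k ≤ n) :
    a.gcd k ^ 2 ≤ sqDivisorSum n (a * k) := by
  have h_dvd : a.gcd k ^ 2 ∣ a * k := by
    rw [sq]; exact mul_dvd_mul (Nat.gcd_dvd_left a k) (Nat.gcd_dvd_right a k)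
  refine single_le_sum (f := fun g => g ^ 2) (fun _ _ => Nat.zero_le _) ?_
  simp only [mem_filter, mem_Icc, Nat.le_sqrt']
  exact ⟨⟨Nat.gcd_pos_of_pos_left k ha, (Nat.le_of_dvd (by positivity) h_dvd).trans hn⟩, h_dvd⟩

lemma sum_sqDivisorSum_le (n : ℕ) : ∑ m ∈ Ioo 0 n, sqDivisorSum n m ≤ n.sqrt * n := by
  unfold sqDivisorSum
  rw [sum_comm' (t' := Icc 1 n.sqrt) (s' := fun g => {m ∈ Ioo 0 n | g ^ 2 ∣ m})
    (by intro m g; simp only [mem_filter]; tauto)]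
  calc ∑ g ∈ Icc 1 n.sqrt, ∑ m ∈ Ioo 0 n with g ^ 2 ∣ m, g ^ 2
      ≤ ∑ g ∈ Icc 1 n.sqrt, n := sum_le_sum fun g _ => ?_
    _ = n.sqrt * n := by simp
  rw [sum_const, smul_eq_mul]
  calc #{m ∈ Ioo 0 n | g ^ 2 ∣ m} * g ^ 2 ≤ n / g ^ 2 * g ^ 2 := by
        gcongr
        rw [← Nat.Ioc_filter_dvd_card_eq_div]
        exact card_le_card (filter_subset_filter _ Ioo_subset_Ioc_self)
    _ ≤ n := Nat.div_mul_le_self n _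

lemma sum_twoCylinderData_gcd_sq_le (n : ℕ) :
    ∑ q ∈ twoCylinderData n, q.1.1.gcd q.2.1 ^ 2 ≤
      ∑ m ∈ Ioo 0 n, #m.divisors * #(n - m).divisors * sqDivisorSum n m := by
  have h_maps : ∀ q ∈ twoCylinderData n, q.1.1 * q.2.1 ∈ Ioo 0 n := by
    rintro ⟨⟨a, b⟩, k, l⟩ hq
    rw [mem_twoCylinderData] at hq
    simp only [mem_Ioo]
    constructor <;> nlinarith
  rw [← sum_fiberwise_of_maps_to h_maps]
  refine sum_le_sum fun m _ => ?_
  calc ∑ q ∈ twoCylinderData n with q.1.1 * q.2.1 = m, q.1.1.gcd q.2.1 ^ 2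
      ≤ #{q ∈ twoCylinderData n | q.1.1 * q.2.1 = m} • sqDivisorSum n m := by
        refine sum_le_card_nsmul _ _ _ ?_
        rintro ⟨⟨a, b⟩, k, l⟩ hq
        simp only [mem_filter, mem_twoCylinderData] at hq
        dsimp only
        rw [← hq.2]
        exact gcd_sq_le_sqDivisorSum hq.1.1 hq.1.2.2.1 (by omega)
    _ ≤ _ := by
        rw [smul_eq_mul]
        gcongr
        exact card_twoCylinderData_filter_mul_eq_le n m

lemma sum_twoCylinderData_gcd_mul_gcd_le (n : ℕ) {D : ℝ} (hD : ∀ m ≤ n, (#m.divisors : ℝ) ≤ D) :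
    ((∑ q ∈ twoCylinderData n, q.1.1.gcd q.2.1 * q.1.2.gcd q.2.2 : ℕ) : ℝ) ≤
      D ^ 2 * (n * √n) := by
  have hD0 : 0 ≤ D := (Nat.cast_nonneg _).trans (hD 0 (Nat.zero_le n))
  calc ((∑ q ∈ twoCylinderData n, q.1.1.gcd q.2.1 * q.1.2.gcd q.2.2 : ℕ) : ℝ)
      ≤ ((∑ m ∈ Ioo 0 n, #m.divisors * #(n - m).divisors * sqDivisorSum n m : ℕ) : ℝ) := by
        exact_mod_cast (sum_twoCylinderData_gcd_mul_gcd_le_sum_gcd_sq n).trans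
          (sum_twoCylinderData_gcd_sq_le n)
    _ ≤ ∑ m ∈ Ioo 0 n, D ^ 2 * (sqDivisorSum n m : ℝ) := by
        push_cast
        refine sum_le_sum fun m hm => ?_
        rw [sq]
        gcongr
        · exact hD m (mem_Ioo.1 hm).2.le
        · exact hD _ (Nat.sub_le n m)
    _ = D ^ 2 * ((∑ m ∈ Ioo 0 n, sqDivisorSum n m : ℕ) : ℝ) := by
        rw [← mul_sum, Nat.cast_sum]
    _ ≤ D ^ 2 * (n * √n) := by
        gcongr
        calc ((∑ m ∈ Ioo 0 n, sqDivisorSum n m : ℕ) : ℝ) ≤ ((n.sqrt * n : ℕ) : ℝ) := by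
              exact_mod_cast sum_sqDivisorSum_le n
          _ ≤ n * √n := by
              rw [Nat.cast_mul, mul_comm]
              gcongr
              exact Real.nat_sqrt_le_real_sqrt

/-- For every `ε > 0`, the function
`n ↦ ∑_{a,b,k,ℓ ≥ 1, ak + bℓ = n} gcd(a,k)·gcd(b,ℓ)` is `O(n^{3/2+ε})` as `n → ∞`. -/
theorem two_cylinder_cusp_count_subquadratic (ε : ℝ) (hε : 0 < ε) :
    (fun n : ℕ =>
        ((∑ q ∈ ((Finset.Ioc 0 n ×ˢ Finset.Ioc 0 n) ×ˢ
              (Finset.Ioc 0 n ×ˢ Finset.Ioc 0 n)).filter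
            (fun q : (ℕ × ℕ) × ℕ × ℕ => q.1.1 * q.2.1 + q.1.2 * q.2.2 = n),
            Nat.gcd q.1.1 q.2.1 * Nat.gcd q.1.2 q.2.2 : ℕ) : ℝ))
      =O[atTop] fun n : ℕ => (n : ℝ) ^ ((3 : ℝ) / 2 + ε) := by
  obtain ⟨C, hC⟩ := Nat.exists_card_divisors_le_mul_rpow (half_pos hε)
  have hC0 : 0 ≤ C := by simpa using (hC 1).trans' (Nat.cast_nonneg _)
  refine isBigO_iff.2 ⟨C ^ 2, (eventually_gt_atTop 0).mono fun n hn => ?_⟩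
  have hn' : (0 : ℝ) < n := Nat.cast_pos.2 hn
  have hD : ∀ m ≤ n, (#m.divisors : ℝ) ≤ C * (n : ℝ) ^ (ε / 2) := fun m hm =>
    (hC m).trans (by gcongr)
  rw [Real.norm_natCast, Real.norm_of_nonneg (by positivity)]
  calc _ ≤ (C * (n : ℝ) ^ (ε / 2)) ^ 2 * (n * √n) :=
        sum_twoCylinderData_gcd_mul_gcd_le n hD
    _ = C ^ 2 * (n : ℝ) ^ ((3 : ℝ) / 2 + ε) := by
        rw [Real.sqrt_eq_rpow, mul_pow, ← Real.rpow_mul_natCast hn'.le,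
          ← Real.rpow_one_add' hn'.le (by norm_num), mul_assoc, ← Real.rpow_add hn']
        congr 2
        push_cast
        ring
end

section
/- For every positive integer n, the sum of gcd(a,k)·gcd(b,ℓ) over all quadruples (a,b,k,ℓ) of positive integers with ak + bℓ = n equals the sum of u·v·f(A)·f(B) over all quadruples (A,B,u,v) of positive integers with Au² + Bv² = n, where f(m) denotes the number of pairs (r,s) of positive integers with rs = m and gcd(r,s) = 1. -/
/-- The number of ordered coprime factorizations of `m`: pairs `(r,s)` of positive
integers with `rs = m` and `gcd(r,s) = 1`. -/
def coprimeFactorizations (m : ℕ) : ℕ :=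
  ((Finset.Ioc 0 m ×ˢ Finset.Ioc 0 m).filter
    (fun p : ℕ × ℕ => p.1 * p.2 = m ∧ Nat.Coprime p.1 p.2)).card

/-- The finset of coprime factorizations. -/
def cfSet (m : ℕ) : Finset (ℕ × ℕ) :=
  (Finset.Ioc 0 m ×ˢ Finset.Ioc 0 m).filter
    (fun p : ℕ × ℕ => p.1 * p.2 = m ∧ Nat.Coprime p.1 p.2)

lemma coprimeFactorizations_eq_card (m : ℕ) :
    coprimeFactorizations m = (cfSet m).card := rfl

lemma mem_cfSet {m : ℕ} {p : ℕ × ℕ} :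
    p ∈ cfSet m ↔ (0 < p.1 ∧ 0 < p.2) ∧ p.1 * p.2 = m ∧ Nat.Coprime p.1 p.2 := by
  unfold cfSet
  simp only [Finset.mem_filter, Finset.mem_product, Finset.mem_Ioc]
  constructor
  · rintro ⟨⟨⟨h1, _⟩, h2, _⟩, h3, h4⟩
    exact ⟨⟨h1, h2⟩, h3, h4⟩
  · rintro ⟨⟨h1, h2⟩, h3, h4⟩
    refine ⟨⟨⟨h1, ?_⟩, h2, ?_⟩, h3, h4⟩
    · rw [← h3]; exact Nat.le_mul_of_pos_right _ h2
    · rw [← h3]; exact Nat.le_mul_of_pos_left _ h1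

/-- For every positive integer `n`,
`∑_{ak+bℓ=n} gcd(a,k)·gcd(b,ℓ) = ∑_{Au²+Bv²=n} u·v·f(A)·f(B)`,
where `f(m)` is the number of coprime factorizations of `m`. -/
theorem gcd_sum_eq_coprime_factorization_sum (n : ℕ) (hn : 0 < n) :
    (∑ q ∈ ((Finset.Ioc 0 n ×ˢ Finset.Ioc 0 n) ×ˢ
          (Finset.Ioc 0 n ×ˢ Finset.Ioc 0 n)).filter
        (fun q : (ℕ × ℕ) × ℕ × ℕ => q.1.1 * q.2.1 + q.1.2 * q.2.2 = n),
        Nat.gcd q.1.1 q.2.1 * Nat.gcd q.1.2 q.2.2) =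
    (∑ q ∈ ((Finset.Ioc 0 n ×ˢ Finset.Ioc 0 n) ×ˢ
          (Finset.Ioc 0 n ×ˢ Finset.Ioc 0 n)).filter
        (fun q : (ℕ × ℕ) × ℕ × ℕ => q.1.1 * q.2.1 ^ 2 + q.1.2 * q.2.2 ^ 2 = n),
        q.2.1 * q.2.2 * coprimeFactorizations q.1.1 * coprimeFactorizations q.1.2) := by
  classical
  have hRHS : (∑ q ∈ ((Finset.Ioc 0 n ×ˢ Finset.Ioc 0 n) ×ˢ
          (Finset.Ioc 0 n ×ˢ Finset.Ioc 0 n)).filter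
        (fun q : (ℕ × ℕ) × ℕ × ℕ => q.1.1 * q.2.1 ^ 2 + q.1.2 * q.2.2 ^ 2 = n),
        q.2.1 * q.2.2 * coprimeFactorizations q.1.1 * coprimeFactorizations q.1.2) =
      ∑ x ∈ (((Finset.Ioc 0 n ×ˢ Finset.Ioc 0 n) ×ˢ
          (Finset.Ioc 0 n ×ˢ Finset.Ioc 0 n)).filter
        (fun q : (ℕ × ℕ) × ℕ × ℕ => q.1.1 * q.2.1 ^ 2 + q.1.2 * q.2.2 ^ 2 = n)).sigma
          (fun q => cfSet q.1.1 ×ˢ cfSet q.1.2),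
        x.1.2.1 * x.1.2.2 := by
    rw [Finset.sum_sigma]
    refine Finset.sum_congr rfl fun q _ => ?_
    show _ = ∑ _s ∈ cfSet q.1.1 ×ˢ cfSet q.1.2, (q.2.1 * q.2.2)
    rw [Finset.sum_const, Finset.card_product, smul_eq_mul,
      coprimeFactorizations_eq_card, coprimeFactorizations_eq_card]
    ring
  rw [hRHS]
  refine Finset.sum_nbij'
    (i := fun x => ⟨((x.1.1 / Nat.gcd x.1.1 x.2.1 * (x.2.1 / Nat.gcd x.1.1 x.2.1),
                      x.1.2 / Nat.gcd x.1.2 x.2.2 * (x.2.2 / Nat.gcd x.1.2 x.2.2)),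
                     (Nat.gcd x.1.1 x.2.1, Nat.gcd x.1.2 x.2.2)),
                    ((x.1.1 / Nat.gcd x.1.1 x.2.1, x.2.1 / Nat.gcd x.1.1 x.2.1),
                     (x.1.2 / Nat.gcd x.1.2 x.2.2, x.2.2 / Nat.gcd x.1.2 x.2.2))⟩)
    (j := fun y => ((y.1.2.1 * y.2.1.1, y.1.2.2 * y.2.2.1),
                    (y.1.2.1 * y.2.1.2, y.1.2.2 * y.2.2.2)))
    ?_ ?_ ?_ ?_ ?_
  · -- forward membership
    rintro ⟨⟨a, b⟩, ⟨k, l⟩⟩ hx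
    simp only [Finset.mem_filter, Finset.mem_product, Finset.mem_Ioc] at hx
    obtain ⟨⟨⟨⟨ha0, han⟩, hb0, hbn⟩, ⟨hk0, hkn⟩, hl0, hln⟩, heq⟩ := hx
    have hg1 : 0 < Nat.gcd a k := Nat.gcd_pos_of_pos_left _ ha0
    have hg2 : 0 < Nat.gcd b l := Nat.gcd_pos_of_pos_left _ hb0
    have hd1a : Nat.gcd a k ∣ a := Nat.gcd_dvd_left a k
    have hd1k : Nat.gcd a k ∣ k := Nat.gcd_dvd_right a k
    have hd2b : Nat.gcd b l ∣ b := Nat.gcd_dvd_left b l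
    have hd2l : Nat.gcd b l ∣ l := Nat.gcd_dvd_right b l
    have hA : a / Nat.gcd a k * (k / Nat.gcd a k) * Nat.gcd a k ^ 2 = a * k := by
      rw [Nat.div_mul_div_comm hd1a hd1k, pow_two,
        Nat.div_mul_cancel (mul_dvd_mul hd1a hd1k)]
    have hB : b / Nat.gcd b l * (l / Nat.gcd b l) * Nat.gcd b l ^ 2 = b * l := by
      rw [Nat.div_mul_div_comm hd2b hd2l, pow_two,
        Nat.div_mul_cancel (mul_dvd_mul hd2b hd2l)]
    have har : 0 < a / Nat.gcd a k := Nat.div_pos (Nat.le_of_dvd ha0 hd1a) hg1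
    have hks : 0 < k / Nat.gcd a k := Nat.div_pos (Nat.le_of_dvd hk0 hd1k) hg1
    have hbp : 0 < b / Nat.gcd b l := Nat.div_pos (Nat.le_of_dvd hb0 hd2b) hg2
    have hlq : 0 < l / Nat.gcd b l := Nat.div_pos (Nat.le_of_dvd hl0 hd2l) hg2
    have hAn : a / Nat.gcd a k * (k / Nat.gcd a k) ≤ n := by
      calc a / Nat.gcd a k * (k / Nat.gcd a k)
          ≤ a / Nat.gcd a k * (k / Nat.gcd a k) * Nat.gcd a k ^ 2 :=
            Nat.le_mul_of_pos_right _ (by positivity)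
        _ = a * k := hA
        _ ≤ a * k + b * l := Nat.le_add_right _ _
        _ = n := heq
    have hBn : b / Nat.gcd b l * (l / Nat.gcd b l) ≤ n := by
      calc b / Nat.gcd b l * (l / Nat.gcd b l)
          ≤ b / Nat.gcd b l * (l / Nat.gcd b l) * Nat.gcd b l ^ 2 :=
            Nat.le_mul_of_pos_right _ (by positivity)
        _ = b * l := hB
        _ ≤ a * k + b * l := Nat.le_add_left _ _
        _ = n := heq
    rw [Finset.mem_sigma, Finset.mem_filter, Finset.mem_product, Finset.mem_product,
      Finset.mem_product, Finset.mem_Ioc, Finset.mem_Ioc, Finset.mem_Ioc, Finset.mem_Ioc]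
    refine ⟨⟨⟨⟨⟨by positivity, hAn⟩, by positivity, hBn⟩,
      ⟨hg1, le_trans (Nat.le_of_dvd ha0 hd1a) han⟩,
      ⟨hg2, le_trans (Nat.le_of_dvd hb0 hd2b) hbn⟩⟩, ?_⟩, ?_⟩
    · show a / Nat.gcd a k * (k / Nat.gcd a k) * Nat.gcd a k ^ 2 +
        b / Nat.gcd b l * (l / Nat.gcd b l) * Nat.gcd b l ^ 2 = n
      rw [hA, hB]; exact heq
    · rw [Finset.mem_product, mem_cfSet, mem_cfSet]
      exact ⟨⟨⟨har, hks⟩, rfl, Nat.coprime_div_gcd_div_gcd hg1⟩,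
        ⟨hbp, hlq⟩, rfl, Nat.coprime_div_gcd_div_gcd hg2⟩
  · -- backward membership
    rintro ⟨⟨⟨A, B⟩, ⟨u, v⟩⟩, ⟨⟨r, s⟩, ⟨p, q⟩⟩⟩ hy
    simp only [Finset.mem_sigma, Finset.mem_filter, Finset.mem_product, Finset.mem_Ioc,
      mem_cfSet] at hy
    obtain ⟨⟨⟨⟨⟨hA0, hAn⟩, hB0, hBn⟩, ⟨hu0, hun⟩, hv0, hvn⟩, heq⟩,
      ⟨⟨hr0, hs0⟩, hrs, hcop1⟩, ⟨hp0, hq0⟩, hpq, hcop2⟩ := hy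
    have h1 : u * r * (u * s) = A * u ^ 2 := by rw [← hrs]; ring
    have h2 : v * p * (v * q) = B * v ^ 2 := by rw [← hpq]; ring
    have hur : u * r ≤ n := by
      calc u * r ≤ u * r * (u * s) := Nat.le_mul_of_pos_right _ (by positivity)
        _ = A * u ^ 2 := h1
        _ ≤ A * u ^ 2 + B * v ^ 2 := Nat.le_add_right _ _
        _ = n := heq
    have hus : u * s ≤ n := by
      calc u * s ≤ u * r * (u * s) := Nat.le_mul_of_pos_left _ (by positivity)
        _ = A * u ^ 2 := h1
        _ ≤ A * u ^ 2 + B * v ^ 2 := Nat.le_add_right _ _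
        _ = n := heq
    have hvp : v * p ≤ n := by
      calc v * p ≤ v * p * (v * q) := Nat.le_mul_of_pos_right _ (by positivity)
        _ = B * v ^ 2 := h2
        _ ≤ A * u ^ 2 + B * v ^ 2 := Nat.le_add_left _ _
        _ = n := heq
    have hvq : v * q ≤ n := by
      calc v * q ≤ v * p * (v * q) := Nat.le_mul_of_pos_left _ (by positivity)
        _ = B * v ^ 2 := h2
        _ ≤ A * u ^ 2 + B * v ^ 2 := Nat.le_add_left _ _
        _ = n := heq
    rw [Finset.mem_filter, Finset.mem_product, Finset.mem_product, Finset.mem_product,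
      Finset.mem_Ioc, Finset.mem_Ioc, Finset.mem_Ioc, Finset.mem_Ioc]
    refine ⟨⟨⟨⟨by positivity, hur⟩, by positivity, hvp⟩,
      ⟨by positivity, hus⟩, by positivity, hvq⟩, ?_⟩
    show u * r * (u * s) + v * p * (v * q) = n
    rw [h1, h2]; exact heq
  · -- left inverse
    rintro ⟨⟨a, b⟩, ⟨k, l⟩⟩ hx
    simp only [Nat.mul_div_cancel' (Nat.gcd_dvd_left a k),
      Nat.mul_div_cancel' (Nat.gcd_dvd_right a k),
      Nat.mul_div_cancel' (Nat.gcd_dvd_left b l),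
      Nat.mul_div_cancel' (Nat.gcd_dvd_right b l)]
  · -- right inverse
    rintro ⟨⟨⟨A, B⟩, ⟨u, v⟩⟩, ⟨⟨r, s⟩, ⟨p, q⟩⟩⟩ hy
    simp only [Finset.mem_sigma, Finset.mem_filter, Finset.mem_product, Finset.mem_Ioc,
      mem_cfSet] at hy
    obtain ⟨⟨⟨_, ⟨hu0, _⟩, hv0, _⟩, _⟩,
      ⟨_, hrs, hcop1⟩, _, hpq, hcop2⟩ := hy
    have hg1 : Nat.gcd (u * r) (u * s) = u := by
      rw [Nat.gcd_mul_left, hcop1, mul_one]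
    have hg2 : Nat.gcd (v * p) (v * q) = v := by
      rw [Nat.gcd_mul_left, hcop2, mul_one]
    simp only [hg1, hg2, Nat.mul_div_cancel_left _ hu0, Nat.mul_div_cancel_left _ hv0,
      hrs, hpq]
  · -- weights agree
    rintro ⟨⟨a, b⟩, ⟨k, l⟩⟩ _
    rfl
end
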